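/- arXiv:math/0511126 — 10 statements merged into one kernel-verified Lean document; each statement's English description precedes it below -/
import Mathlib

section
/- Let A be a unital C*-algebra with unit e and let a, b be unitary elements of A (a*a = aa* = b*b = bb* = e). For any x ∈ A, the 3×3 matrix Q over A with rows (e, a, x), (a*, e, b), (x*, b*, e) is a positive element of the C*-algebra M₃(A) if and only if x = ab. -/
/-!
If `Q ≥ 0`, its quadratic form at the vector `(e, -a*, -z*)`, where `z = x - ab`, equals `-zz*`;
so `zz* ≤ 0`, and the C*-identity forces `z = 0`. Conversely, for `x = ab` the matrix `Q` is the
rank-one positive matrix `v* v` of the row `v = (e, a, ab)`.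
-/

open Matrix

/-- In the C*-algebra `Mₙ(A)` of matrices over a C*-algebra `A`
(with star = conjugate transpose), an element `Q` is positive iff it can be
written as `yᴴ * y` for some matrix `y`.  We use this exact characterization
as the definition of membership in the positive cone of `Mₙ(A)`. -/
def Matrix.IsPositive {A : Type*} [CStarAlgebra A] {n : ℕ}
    (Q : Matrix (Fin n) (Fin n) A) : Prop :=
  ∃ y : Matrix (Fin n) (Fin n) A, Q = yᴴ * y

namespace Matrix.IsPositive

variable {A : Type*} [CStarAlgebra A] {n : ℕ}

theorem dotProduct_mulVec_nonneg [PartialOrder A] [StarOrderedRing A]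
    {Q : Matrix (Fin n) (Fin n) A} (hQ : Q.IsPositive) (w : Fin n → A) :
    0 ≤ star w ⬝ᵥ Q *ᵥ w := by
  obtain ⟨y, rfl⟩ := hQ
  rw [← mulVec_mulVec, dotProduct_mulVec, ← star_mulVec]
  exact dotProduct_star_self_nonneg _

theorem vecMulVec_star_self [NeZero n] (v : Fin n → A) :
    (vecMulVec (star v) v).IsPositive :=
  ⟨vecMulVec (Pi.single 0 1) v, by
    rw [conjTranspose_vecMulVec, vecMulVec_mul_vecMulVec, ← Pi.single_star, star_one]
    simp⟩

end Matrix.IsPositive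

section FinThree

variable {A : Type*} [CStarAlgebra A] {a b x : A}

theorem eq_mul_of_isPositive_fin_three (ha : a * star a = 1)
    (hQ : Matrix.IsPositive !![1, a, x; star a, 1, b; star x, star b, 1]) : x = a * b := by
  let _ := CStarAlgebra.spectralOrder A
  have := CStarAlgebra.spectralOrderedRing A
  set z := x - a * b with hz
  have hform : star ![1, -star a, -star z] ⬝ᵥ
      !![1, a, x; star a, 1, b; star x, star b, 1] *ᵥ ![1, -star a, -star z] = -(z * star z) := by
    simp only [dotProduct, mulVec, Fin.sum_univ_three, of_apply, cons_val_zero, cons_val_one,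
      cons_val, Pi.star_apply, star_one, star_neg, star_star, mul_neg, ha, hz, star_sub, star_mul]
    noncomm_ring
  have hnonpos : z * star z ≤ 0 :=
    neg_nonneg.mp (hform ▸ hQ.dotProduct_mulVec_nonneg ![1, -star a, -star z])
  have hzero : z * star z = 0 := le_antisymm hnonpos (mul_star_self_nonneg z)
  exact sub_eq_zero.mp ((CStarRing.mul_star_self_eq_zero_iff z).mp hzero)

theorem isPositive_fin_three_mul (ha : star a * a = 1) (hb : star b * b = 1) :
    Matrix.IsPositive !![1, a, a * b; star a, 1, b; star (a * b), star b, 1] := by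
  convert Matrix.IsPositive.vecMulVec_star_self ![1, a, a * b] using 1
  have hab : star a * (a * b) = b := by rw [← mul_assoc, ha, one_mul]
  ext i j
  fin_cases i <;> fin_cases j <;> simp [mul_assoc, ha, hb, hab]

end FinThree

theorem stmt_0 {A : Type*} [CStarAlgebra A] (a b x : A)
    (ha : star a * a = 1 ∧ a * star a = 1)
    (hb : star b * b = 1 ∧ b * star b = 1) :
    Matrix.IsPositive !![1, a, x; star a, 1, b; star x, star b, 1] ↔ x = a * b := by
  refine ⟨eq_mul_of_isPositive_fin_three ha.2, ?_⟩
  rintro rfl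
  exact isPositive_fin_three_mul ha.1 hb.1
end

section
/- Let α, β, χ ∈ ℂ and suppose the 3×3 complex matrix with rows (1, α, χ), (conj(α), 1, β), (conj(χ), conj(β), 1) is positive semidefinite. Then |χ − αβ|² ≤ (1 − |α|²)(1 − |β|²). -/
open scoped ComplexOrder

lemma det_unitDiagonal_hermitian_fin_three (α β χ : ℂ) :
    (!![1, α, χ;
        (starRingEnd ℂ) α, 1, β;
        (starRingEnd ℂ) χ, (starRingEnd ℂ) β, 1] : Matrix (Fin 3) (Fin 3) ℂ).det =
      (((1 - ‖α‖ ^ 2) * (1 - ‖β‖ ^ 2) - ‖χ - α * β‖ ^ 2 : ℝ) : ℂ) := by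
  push_cast
  simp only [← Complex.mul_conj', Matrix.det_fin_three, Matrix.of_apply, Matrix.cons_val',
    Matrix.cons_val_zero, Matrix.cons_val_one, Matrix.cons_val_two, Matrix.empty_val',
    Matrix.cons_val_fin_one, Matrix.head_cons, Matrix.head_fin_const, Matrix.tail_cons,
    map_sub, map_mul]
  ring

theorem stmt_4 (α β χ : ℂ)
    (h : (!![1, α, χ;
             (starRingEnd ℂ) α, 1, β;
             (starRingEnd ℂ) χ, (starRingEnd ℂ) β, 1] :
          Matrix (Fin 3) (Fin 3) ℂ).PosSemidef) :
    ‖χ - α * β‖ ^ 2 ≤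
      (1 - ‖α‖ ^ 2) * (1 - ‖β‖ ^ 2) := by
  have hdet := h.det_nonneg
  rw [det_unitDiagonal_hermitian_fin_three, Complex.zero_le_real] at hdet
  linarith
end

section
/- Let α, β, χ ∈ ℂ with |α| = 1, and suppose the 3×3 complex matrix with rows (1, α, χ), (conj(α), 1, β), (conj(χ), conj(β), 1) is positive semidefinite. Then χ = αβ. -/
open scoped ComplexOrder

/-!
If `A` is positive semidefinite with `A i i = A j j = 1` and `|A i j| = 1`, the vector
`v = A i j • eᵢ - eⱼ` has `star v ⬝ᵥ A *ᵥ v = 1 - |A i j|² = 0`, hence `A *ᵥ v = 0`. Reading this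
off coordinatewise gives `A k j = A i j * A k i`, and by hermiticity `A i k = A i j * A j k`.
-/

namespace Matrix.PosSemidef

variable {n 𝕜 : Type*} [Fintype n] [DecidableEq n] [RCLike 𝕜] {A : Matrix n n 𝕜}

theorem mulVec_single_sub_single_eq_zero (hA : A.PosSemidef) {i j : n} (hi : A i i = 1)
    (hj : A j j = 1) (hij : ‖A i j‖ = 1) :
    A *ᵥ (Pi.single i (A i j) - Pi.single j 1) = 0 := by
  have hji : A j i = star (A i j) := (hA.isHermitian.apply j i).symm
  have hunit : star (A i j) * A i j = 1 := by
    rw [RCLike.star_def, RCLike.conj_mul, hij]; simp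
  have hAv : ∀ k, (A *ᵥ (Pi.single i (A i j) - Pi.single j 1)) k = A i j * A k i - A k j := by
    intro k; simp [mulVec_sub]
  refine (hA.dotProduct_mulVec_zero_iff _).mp ?_
  simp only [star_sub, Pi.star_single, star_one, sub_dotProduct, single_dotProduct, hAv, hi, hj,
    hji]
  linear_combination -hunit

theorem apply_eq_mul_apply (hA : A.PosSemidef) {i j : n} (hi : A i i = 1)
    (hj : A j j = 1) (hij : ‖A i j‖ = 1) (k : n) : A i k = A i j * A j k := by
  have hunit : A i j * A j i = 1 := by
    rw [← hA.isHermitian.apply j i, RCLike.star_def, RCLike.mul_conj, hij]; simp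
  have hcol : A i j * A k i = A k j := by
    simpa [mulVec_sub, sub_eq_zero] using congrFun (hA.mulVec_single_sub_single_eq_zero hi hj hij) k
  have hrow : A j k = A j i * A i k := by
    simpa [hA.isHermitian.apply] using congrArg star hcol.symm
  rw [hrow, ← mul_assoc, hunit, one_mul]

end Matrix.PosSemidef

theorem stmt_5 (α β χ : ℂ) (hα : ‖α‖ = 1)
    (h : (!![1, α, χ;
             (starRingEnd ℂ) α, 1, β;
             (starRingEnd ℂ) χ, (starRingEnd ℂ) β, 1] :
          Matrix (Fin 3) (Fin 3) ℂ).PosSemidef) :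
    χ = α * β :=
  h.apply_eq_mul_apply (i := 0) (j := 1) rfl rfl hα 2
end

section
/- Let G be a finite group, let a, b ∈ G, and let p be a state on G with |p(a)| = 1. Then p(a * b) = p(b * a) = p(a) · p(b). -/
open scoped ComplexOrder
open Matrix

/-- A function `p : G → ℂ` on a group `G` is positive definite if for every
`n` and every tuple `g : Fin n → G`, the matrix `(p ((g j)⁻¹ * g k))` is
positive semidefinite. -/
def IsPosDefFn {G : Type*} [Group G] (p : G → ℂ) : Prop :=
  ∀ (n : ℕ) (g : Fin n → G),
    (Matrix.of fun j k : Fin n => p ((g j)⁻¹ * g k)).PosSemidef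

/-- A state on a group `G` is a positive definite function with `p 1 = 1`. -/
def IsStateFn {G : Type*} [Group G] (p : G → ℂ) : Prop :=
  IsPosDefFn p ∧ p 1 = 1

/-!
If `|p a| = 1`, then for the points `1, a, c⁻¹` the vector `(-p a, 1, 0)` is isotropic for the
positive semidefinite matrix `(p (gⱼ⁻¹ gₖ))`, hence lies in its kernel; the row of `c⁻¹` of
that kernel equation reads `p (c a) = p a p c`. Applying this to `a⁻¹` and using
`p x⁻¹ = conj (p x)` gives the other side.
-/

section

variable {G : Type*} [Group G] {p : G → ℂ}

theorem IsPosDefFn.map_inv (hp : IsPosDefFn p) (x : G) : p x⁻¹ = starRingEnd ℂ (p x) := by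
  simpa using ((hp 2 ![1, x]).isHermitian.apply 1 0).symm

theorem IsPosDefFn.norm_map_inv (hp : IsPosDefFn p) (x : G) : ‖p x⁻¹‖ = ‖p x‖ := by
  rw [hp.map_inv, Complex.norm_conj]

namespace IsStateFn

theorem map_mul_of_norm_eq_one_right (hp : IsStateFn p) {a : G} (ha : ‖p a‖ = 1) (c : G) :
    p (c * a) = p a * p c := by
  set g : Fin 3 → G := ![1, a, c⁻¹]
  set v : Fin 3 → ℂ := ![-p a, 1, 0]
  have hpa : starRingEnd ℂ (p a) * p a = 1 := by
    rw [mul_comm, Complex.mul_conj, Complex.normSq_eq_norm_sq, ha]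
    norm_num
  have hisotropic : star v ⬝ᵥ (of fun j k => p ((g j)⁻¹ * g k)) *ᵥ v = 0 := by
    simp only [dotProduct, Pi.star_apply, RCLike.star_def, mulVec, of_apply, Fin.sum_univ_three,
      Fin.isValue, cons_val_zero, mul_one, mul_neg, cons_val_one, cons_val, mul_zero, add_zero,
      map_neg, inv_one, hp.2, one_mul, neg_add_cancel, map_one, hp.1.map_inv a, inv_mul_cancel,
      zero_add, map_zero, inv_inv, zero_mul, v, g]
    linear_combination -hpa
  have hkernel := congrFun ((hp.1 3 g).dotProduct_mulVec_zero_iff v |>.mp hisotropic) 2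
  simp only [mulVec, dotProduct, Fin.isValue, of_apply, cons_val, inv_inv, Fin.sum_univ_three,
    cons_val_zero, mul_one, mul_neg, cons_val_one, mul_inv_cancel, mul_zero, add_zero,
    Pi.zero_apply, g, v] at hkernel
  linear_combination hkernel

theorem map_mul_of_norm_eq_one_left (hp : IsStateFn p) {a : G} (ha : ‖p a‖ = 1) (c : G) :
    p (a * c) = p a * p c := by
  have h := hp.map_mul_of_norm_eq_one_right ((hp.1.norm_map_inv a).trans ha) c⁻¹
  rw [← inv_inv (a * c), _root_.mul_inv_rev, hp.1.map_inv, h, map_mul, ← hp.1.map_inv,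
    ← hp.1.map_inv, inv_inv, inv_inv]

end IsStateFn

end

theorem stmt_8_general {G : Type*} [Group G] (a b : G) (p : G → ℂ)
    (hp : IsStateFn p) (ha : ‖p a‖ = 1) :
    p (a * b) = p a * p b ∧ p (b * a) = p a * p b :=
  ⟨hp.map_mul_of_norm_eq_one_left ha b, hp.map_mul_of_norm_eq_one_right ha b⟩

theorem stmt_8 {G : Type*} [Group G] [Finite G] (a b : G) (p : G → ℂ)
    (hp : IsStateFn p) (ha : ‖p a‖ = 1) :
    p (a * b) = p a * p b ∧ p (b * a) = p a * p b :=
  stmt_8_general a b p hp ha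
end

section
/- Let G be a group, H a subgroup of G, and p : H → ℂ a positive definite function on H. Define q : G → ℂ by q(g) = p(g) if g ∈ H and q(g) = 0 if g ∉ H. Then q is a positive definite function on G. -/
open scoped ComplexOrder
open Classical Matrix

theorem stmt_9 {G : Type*} [Group G] (H : Subgroup G) (p : H → ℂ)
    (hp : IsPosDefFn p) (q : G → ℂ)
    (hq : ∀ g : G, q g = if h : g ∈ H then p ⟨g, h⟩ else 0) :
    IsPosDefFn q := by
  -- p is "hermitian": star (p h) = p h⁻¹
  have pstar : ∀ h : H, star (p h) = p h⁻¹ := by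
    intro h
    have := (hp 2 ![(1 : H), h]).1.apply 1 0
    simpa using this
  have qstar : ∀ a : G, star (q a) = q a⁻¹ := by
    intro a
    rw [hq a, hq a⁻¹]
    by_cases ha : a ∈ H
    · rw [dif_pos ha, dif_pos (H.inv_mem ha)]
      rw [pstar ⟨a, ha⟩]
      exact congrArg p (Subtype.ext rfl)
    · rw [dif_neg ha, dif_neg (fun h => ha (by simpa using H.inv_mem h))]
      simp
  intro n g
  refine Matrix.PosSemidef.of_dotProduct_mulVec_nonneg ?_ ?_
  · -- Hermitian
    ext i j
    simp only [Matrix.conjTranspose_apply, Matrix.of_apply]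
    have := qstar ((g j)⁻¹ * g i)
    simpa [_root_.mul_inv_rev] using this
  · intro x
    -- expand the quadratic form
    have expand : dotProduct (star x)
        ((Matrix.of fun j k : Fin n => q ((g j)⁻¹ * g k)) *ᵥ x) =
        ∑ j, ∑ k, star (x j) * (q ((g j)⁻¹ * g k) * x k) := by
      simp [dotProduct, Matrix.mulVec, Finset.mul_sum]
    rw [expand]
    set t : Fin n → Fin n → ℂ :=
      fun j k => star (x j) * (q ((g j)⁻¹ * g k) * x k) with ht
    set f : Fin n → G ⧸ H := fun j => QuotientGroup.mk (g j) with hf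
    have tzero : ∀ j k, f j ≠ f k → t j k = 0 := by
      intro j k hjk
      have : ¬ (g j)⁻¹ * g k ∈ H := fun hm => hjk (QuotientGroup.eq.2 hm)
      simp [ht, hq, this]
    -- restrict inner sums to fibers
    have step1 : ∀ j, ∑ k, t j k =
        ∑ k ∈ Finset.univ.filter (fun k => f k = f j), t j k := by
      intro j
      exact (Finset.sum_filter_of_ne (fun k _ hk => by
        by_contra hne
        exact hk (tzero j k (fun h => hne h.symm)))).symm
    -- group by fibers
    have step2 : ∑ j, ∑ k, t j k =
        ∑ c ∈ Finset.univ.image f, ∑ j ∈ Finset.univ.filter (fun j => f j = c),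
          ∑ k ∈ Finset.univ.filter (fun k => f k = c), t j k := by
      rw [← Finset.sum_fiberwise_of_maps_to (fun j _ => Finset.mem_image_of_mem f
        (Finset.mem_univ j)) (fun j => ∑ k, t j k)]
      refine Finset.sum_congr rfl fun c _ => Finset.sum_congr rfl fun j hj => ?_
      have hjc : f j = c := (Finset.mem_filter.1 hj).2
      rw [step1 j]
      refine Finset.sum_congr ?_ fun _ _ => rfl
      ext k
      simp [hjc]
    rw [step2]
    refine Finset.sum_nonneg fun c hc => ?_
    obtain ⟨j0, _, hj0⟩ := Finset.mem_image.1 hc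
    set s := Finset.univ.filter (fun j => f j = c) with hs
    have hmem : ∀ j ∈ s, (g j0)⁻¹ * g j ∈ H := by
      intro j hj
      have : f j0 = f j := by rw [hj0, (Finset.mem_filter.1 hj).2]
      exact QuotientGroup.eq.1 this
    -- enumerate the fiber
    set m := s.card with hm
    set e : Fin m → {j // j ∈ s} := fun i => s.equivFin.symm i with he
    set gh : Fin m → H := fun i => ⟨(g j0)⁻¹ * g (e i : Fin n), hmem _ (e i).2⟩ with hgh
    set y : Fin m → ℂ := fun i => x (e i : Fin n) with hy
    have hpos := (hp m gh).dotProduct_mulVec_nonneg y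
    have key : dotProduct (star y)
        ((Matrix.of fun i i' : Fin m => p ((gh i)⁻¹ * gh i')) *ᵥ y) =
        ∑ j ∈ s, ∑ k ∈ s, t j k := by
      have expand2 : dotProduct (star y)
          ((Matrix.of fun i i' : Fin m => p ((gh i)⁻¹ * gh i')) *ᵥ y) =
          ∑ i, ∑ i', star (y i) * (p ((gh i)⁻¹ * gh i') * y i') := by
        simp [dotProduct, Matrix.mulVec, Finset.mul_sum]
      rw [expand2]
      have hterm : ∀ i i' : Fin m,
          star (y i) * (p ((gh i)⁻¹ * gh i') * y i') = t (e i : Fin n) (e i' : Fin n) := by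
        intro i i'
        have hH : ((gh i)⁻¹ * gh i' : G) = (g (e i : Fin n))⁻¹ * g (e i' : Fin n) := by
          simp only [hgh, Subgroup.coe_mul, Subgroup.coe_inv, _root_.mul_inv_rev, inv_inv, mul_assoc,
            mul_inv_cancel_left]
        have hmemH : (g (e i : Fin n))⁻¹ * g (e i' : Fin n) ∈ H := by
          rw [← hH]; exact ((gh i)⁻¹ * gh i').2
        have : q ((g (e i : Fin n))⁻¹ * g (e i' : Fin n)) = p ((gh i)⁻¹ * gh i') := by
          rw [hq, dif_pos hmemH]
          congr 1
          exact Subtype.ext hH.symm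
        simp [ht, hy, this]
      rw [Finset.sum_congr rfl fun i _ => Finset.sum_congr rfl fun i' _ => hterm i i']
      -- now change double sum over Fin m into double sum over s
      rw [← Finset.sum_coe_sort s (fun j => ∑ k ∈ s, t j k)]
      rw [← Fintype.sum_equiv s.equivFin.symm _ (fun a : {j // j ∈ s} => ∑ k ∈ s, t a k)
        (fun i => ?_)]
      show ∑ i' : Fin m, t (e i : Fin n) (e i' : Fin n) =
        ∑ k ∈ s, t (e i : Fin n) k
      rw [← Finset.sum_coe_sort s (fun k => t (e i : Fin n) k)]
      exact Fintype.sum_equiv s.equivFin.symm _ _ (fun i' => rfl)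
    rw [← key]
    exact hpos
end

section
/- Let H be a complex Hilbert space and let a, b, x be bounded operators on H with a unitary. Let ξ ∈ H be a unit vector with aξ = λξ for some λ ∈ ℂ. Suppose that for every unit vector ζ ∈ H the matrix Q_{p_ζ} is positive semidefinite, where p_ζ is the vector state p_ζ(T) = ⟪Tζ, ζ⟫. Then for every unit vector η orthogonal to ξ: |⟪(x − ab)η, ξ⟫ + ⟪(x − ba)ξ, η⟫|² ≤ (1 − |⟪bξ, ξ⟫|²) · ‖(λ·I − a)η‖². -/
/-!
Positivity of `Q_p` yields the Schur-complement inequality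
`‖p x - p a * p b‖² ≤ (1 - ‖p a‖²) (1 - ‖p b‖²)`, and for an isometry `a` with eigenvalue `l`
and a unit vector `ζ` one has `1 - ‖p_ζ a‖² ≤ ‖(l • 1 - a) ζ‖²`. At `ζ = ξ` the first
inequality forces `p x = l * p b`, so along the unit curve `ζ t = cos t • ξ + sin t • η`
both sides of `‖p x - p a * p b‖² ≤ ‖(l • 1 - a) ζ t‖² (1 - ‖p b‖²)` vanish at `t = 0`.
Dividing by `t²` and letting `t → 0` compares their derivatives, which is the claim once
`⟪ξ, a η⟫ = l ⟪ξ, η⟫ = 0` and `⟪ξ, a b η⟫ = l ⟪ξ, b η⟫` are used.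
-/

open scoped ComplexOrder ComplexInnerProductSpace

def QmatOp {B : Type*} (p : B → ℂ) (a b x : B) : Matrix (Fin 3) (Fin 3) ℂ :=
  !![1, p a, p x;
     (starRingEnd ℂ) (p a), 1, p b;
     (starRingEnd ℂ) (p x), (starRingEnd ℂ) (p b), 1]

open scoped InnerProductSpace Matrix
open Filter Topology

theorem Matrix.PosSemidef.norm_dotProduct_mulVec_sq_le {n 𝕜 : Type*} [Fintype n] [RCLike 𝕜]
    {M : Matrix n n 𝕜} (hM : M.PosSemidef) (v w : n → 𝕜) :
    ‖star v ⬝ᵥ (M *ᵥ w)‖ ^ 2 ≤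
      RCLike.re (star v ⬝ᵥ (M *ᵥ v)) * RCLike.re (star w ⬝ᵥ (M *ᵥ w)) := by
  let := M.toSeminormedAddCommGroup hM
  let := M.toInnerProductSpace hM
  have h := inner_mul_inner_self_le (𝕜 := 𝕜) v w
  rw [norm_inner_symm w v, ← sq] at h
  simp only [dotProduct_comm (star _)]
  exact h

namespace QmatOp

variable {B : Type*} (p : B → ℂ) (a b x : B)

/- Testing `Q_p` against these two vectors computes its Schur complement with respect to the
middle diagonal entry. -/
theorem re_dotProduct_mulVec_left :
    RCLike.re (star ![1, -(starRingEnd ℂ) (p a), 0] ⬝ᵥ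
      (QmatOp p a b x *ᵥ ![1, -(starRingEnd ℂ) (p a), 0])) = 1 - ‖p a‖ ^ 2 := by
  simp [QmatOp, Matrix.mulVec, dotProduct, Fin.sum_univ_three, Complex.sq_norm,
    Complex.normSq_apply, Complex.mul_re]
  ring

theorem re_dotProduct_mulVec_right :
    RCLike.re (star ![0, -p b, 1] ⬝ᵥ (QmatOp p a b x *ᵥ ![0, -p b, 1])) = 1 - ‖p b‖ ^ 2 := by
  simp [QmatOp, Matrix.mulVec, dotProduct, Fin.sum_univ_three, Complex.sq_norm,
    Complex.normSq_apply, Complex.mul_re]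
  ring

theorem dotProduct_mulVec_left_right :
    star ![1, -(starRingEnd ℂ) (p a), 0] ⬝ᵥ (QmatOp p a b x *ᵥ ![0, -p b, 1]) =
      p x - p a * p b := by
  simp [QmatOp, Matrix.mulVec, dotProduct, Fin.sum_univ_three]
  ring

variable {p a b x}

theorem norm_sq_le_one_right (h : (QmatOp p a b x).PosSemidef) : ‖p b‖ ^ 2 ≤ 1 := by
  have := h.re_dotProduct_nonneg ![0, -p b, 1]
  rw [re_dotProduct_mulVec_right] at this
  linarith

theorem norm_sub_mul_sq_le (h : (QmatOp p a b x).PosSemidef) :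
    ‖p x - p a * p b‖ ^ 2 ≤ (1 - ‖p a‖ ^ 2) * (1 - ‖p b‖ ^ 2) := by
  simpa only [dotProduct_mulVec_left_right, re_dotProduct_mulVec_left,
    re_dotProduct_mulVec_right] using h.norm_dotProduct_mulVec_sq_le
      ![1, -(starRingEnd ℂ) (p a), 0] ![0, -p b, 1]

theorem eq_mul_of_norm_eq_one (h : (QmatOp p a b x).PosSemidef) (ha : ‖p a‖ = 1) :
    p x = p a * p b := by
  have := norm_sub_mul_sq_le h
  rw [ha] at this
  norm_num at this
  exact sub_eq_zero.mp this

end QmatOp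

theorem HasDerivAt.norm_sq_le_norm_sq_mul {E F : Type*} [NormedAddCommGroup E] [NormedSpace ℝ E]
    [NormedAddCommGroup F] [NormedSpace ℝ F] {f : ℝ → E} {g : ℝ → F} {h : ℝ → ℝ}
    {f' : E} {g' : F} {x : ℝ} (hf : HasDerivAt f f' x) (hg : HasDerivAt g g' x)
    (hh : ContinuousAt h x) (hfx : f x = 0) (hgx : g x = 0)
    (hle : ∀ t, ‖f t‖ ^ 2 ≤ ‖g t‖ ^ 2 * h t) :
    ‖f'‖ ^ 2 ≤ ‖g'‖ ^ 2 * h x := by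
  have hf' := hf.tendsto_slope_zero
  have hg' := hg.tendsto_slope_zero
  simp only [hfx, hgx, sub_zero] at hf' hg'
  have hh' : Tendsto (fun t => h (x + t)) (𝓝[≠] 0) (𝓝 (h x)) := by
    have : Tendsto (fun t => x + t) (𝓝 0) (𝓝 x) := by
      simpa using (continuous_const_add x).tendsto 0
    exact (hh.tendsto.comp this).mono_left nhdsWithin_le_nhds
  refine le_of_tendsto_of_tendsto (hf'.norm.pow 2) ((hg'.norm.pow 2).mul hh') ?_
  filter_upwards with t
  simp only [norm_smul, mul_pow, mul_assoc]
  exact mul_le_mul_of_nonneg_left (hle _) (by positivity)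

section RCLike
variable {𝕜 E : Type*} [RCLike 𝕜] [NormedAddCommGroup E] [InnerProductSpace 𝕜 E]

theorem one_sub_norm_inner_sq_le_norm_sub_sq {u v : E} (hu : ‖u‖ = 1) (hv : ‖v‖ = 1) :
    1 - ‖⟪u, v⟫_𝕜‖ ^ 2 ≤ ‖u - v‖ ^ 2 := by
  have hre := RCLike.re_le_norm (⟪u, v⟫_𝕜)
  have hle : ‖⟪u, v⟫_𝕜‖ ≤ 1 := by simpa [hu, hv] using norm_inner_le_norm (𝕜 := 𝕜) u v
  rw [@norm_sub_sq 𝕜, hu, hv]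
  nlinarith

namespace ContinuousLinearMap

variable {a : E →L[𝕜] E} {l : 𝕜}

theorem norm_eq_one_of_apply_eq_smul (ha : ∀ u, ‖a u‖ = ‖u‖) {ξ : E} (hξ : ξ ≠ 0)
    (haξ : a ξ = l • ξ) : ‖l‖ = 1 := by
  have := ha ξ
  rw [haξ, norm_smul] at this
  exact (mul_eq_right₀ (norm_ne_zero_iff.mpr hξ)).mp this

theorem inner_apply_eq_mul_inner_of_apply_eq_smul (ha : ∀ u, ‖a u‖ = ‖u‖) (hl : ‖l‖ = 1) {ξ : E}
    (haξ : a ξ = l • ξ) (w : E) : ⟪ξ, a w⟫_𝕜 = l * ⟪ξ, w⟫_𝕜 := by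
  have hξ : ξ = (starRingEnd 𝕜) l • a ξ := by
    rw [haξ, smul_smul, RCLike.conj_mul, hl]
    simp
  conv_lhs => rw [hξ]
  rw [inner_smul_left, RCLike.conj_conj, (LinearMap.norm_map_iff_inner_map_map a).mp ha]

theorem one_sub_norm_inner_apply_sq_le (ha : ∀ u, ‖a u‖ = ‖u‖) (hl : ‖l‖ = 1) {ζ : E}
    (hζ : ‖ζ‖ = 1) : 1 - ‖⟪ζ, a ζ⟫_𝕜‖ ^ 2 ≤ ‖(l • 1 - a) ζ‖ ^ 2 := by
  have h := one_sub_norm_inner_sq_le_norm_sub_sq (𝕜 := 𝕜) (u := l • ζ) (v := a ζ)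
    (by rw [norm_smul, hl, hζ, one_mul]) (by rw [ha, hζ])
  rwa [inner_smul_left, norm_mul, RCLike.norm_conj, hl, one_mul] at h

end ContinuousLinearMap
end RCLike

section Complex
variable {H : Type*} [NormedAddCommGroup H] [InnerProductSpace ℂ H]

theorem HasDerivAt.inner_apply_self (T : H →L[ℂ] H) {ζ : ℝ → H} {ζ' : H} {t : ℝ}
    (h : HasDerivAt ζ ζ' t) :
    HasDerivAt (fun s => ⟪ζ s, T (ζ s)⟫) (⟪ζ t, T ζ'⟫ + ⟪ζ', T (ζ t)⟫) t := by
  simpa using h.inner ℂ ((T.restrictScalars ℝ).hasFDerivAt.comp_hasDerivAt t h)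

theorem norm_cos_smul_add_sin_smul {u v : H} (hu : ‖u‖ = 1) (hv : ‖v‖ = 1) (huv : ⟪u, v⟫ = 0)
    (t : ℝ) : ‖Real.cos t • u + Real.sin t • v‖ = 1 := by
  have horth : ⟪Real.cos t • u, Real.sin t • v⟫ = 0 := by
    rw [RCLike.real_smul_eq_coe_smul (K := ℂ), RCLike.real_smul_eq_coe_smul (K := ℂ),
      inner_smul_left, inner_smul_right, huv, mul_zero, mul_zero]
  have h := norm_add_sq_eq_norm_sq_add_norm_sq_of_inner_eq_zero _ _ horth
  rw [norm_smul, norm_smul, hu, hv, Real.norm_eq_abs, Real.norm_eq_abs] at h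
  rw [← pow_left_inj₀ (norm_nonneg _) zero_le_one two_ne_zero, sq, h]
  nlinarith [sq_abs (Real.cos t), sq_abs (Real.sin t), Real.cos_sq_add_sin_sq t]

theorem hasDerivAt_cos_smul_add_sin_smul (u v : H) :
    HasDerivAt (fun t => Real.cos t • u + Real.sin t • v) v 0 := by
  simpa using ((Real.hasDerivAt_cos 0).smul_const u).fun_add ((Real.hasDerivAt_sin 0).smul_const v)

theorem QmatOp.norm_sq_deriv_le_of_posSemidef_along {a b x : H →L[ℂ] H} (ha : ∀ u, ‖a u‖ = ‖u‖)
    {l : ℂ} (hl : ‖l‖ = 1) {ξ η : H} (haξ : a ξ = l • ξ)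
    (hQ : ∀ ζ : H, ‖ζ‖ = 1 → (QmatOp (fun T : H →L[ℂ] H => ⟪ζ, T ζ⟫) a b x).PosSemidef)
    {ζ : ℝ → H} (hζ : ∀ t, ‖ζ t‖ = 1) (hζ0 : ζ 0 = ξ) (hζ' : HasDerivAt ζ η 0) :
    ‖⟪ξ, x η⟫ + ⟪η, x ξ⟫ - ((⟪ξ, a η⟫ + ⟪η, a ξ⟫) * ⟪ξ, b ξ⟫ + l * (⟪ξ, b η⟫ + ⟪η, b ξ⟫))‖ ^ 2
      ≤ ‖(l • 1 - a) η‖ ^ 2 * (1 - ‖⟪ξ, b ξ⟫‖ ^ 2) := by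
  have hξ : ‖ξ‖ = 1 := hζ0 ▸ hζ 0
  set p : (H →L[ℂ] H) → ℝ → ℂ := fun T t => ⟪ζ t, T (ζ t)⟫ with hp_def
  have hp : ∀ T, HasDerivAt (p T) (⟪ξ, T η⟫ + ⟪η, T ξ⟫) 0 := fun T => by
    simpa [hζ0] using hζ'.inner_apply_self T
  have hpa0 : p a 0 = l := by
    simp [hp_def, hζ0, haξ, inner_self_eq_norm_sq_to_K, hξ]
  have hpb0 : p b 0 = ⟪ξ, b ξ⟫ := by simp [hp_def, hζ0]
  have hQt : ∀ t, (QmatOp (fun T => p T t) a b x).PosSemidef := fun t => hQ _ (hζ t)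
  have hf : HasDerivAt (fun t => p x t - p a t * p b t)
      (⟪ξ, x η⟫ + ⟪η, x ξ⟫ - ((⟪ξ, a η⟫ + ⟪η, a ξ⟫) * ⟪ξ, b ξ⟫ + l * (⟪ξ, b η⟫ + ⟪η, b ξ⟫))) 0 := by
    simpa [hpa0, hpb0] using (hp x).fun_sub ((hp a).fun_mul (hp b))
  have hg : HasDerivAt (fun t => (l • 1 - a) (ζ t)) ((l • 1 - a) η) 0 :=
    ((l • 1 - a).restrictScalars ℝ).hasFDerivAt.comp_hasDerivAt 0 hζ'
  have hh : ContinuousAt (fun t => 1 - ‖p b t‖ ^ 2) 0 :=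
    continuousAt_const.sub ((hp b).continuousAt.norm.pow 2)
  have hf0 : p x 0 - p a 0 * p b 0 = 0 :=
    sub_eq_zero.mpr (QmatOp.eq_mul_of_norm_eq_one (hQt 0) (hpa0 ▸ hl))
  have hg0 : (l • 1 - a) (ζ 0) = 0 := by simp [hζ0, haξ]
  have hle : ∀ t, ‖p x t - p a t * p b t‖ ^ 2 ≤ ‖(l • 1 - a) (ζ t)‖ ^ 2 * (1 - ‖p b t‖ ^ 2) := by
    intro t
    have hQx := QmatOp.norm_sub_mul_sq_le (p := fun T => p T t) (hQt t)
    have hQb := QmatOp.norm_sq_le_one_right (p := fun T => p T t) (hQt t)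
    have hQa := ContinuousLinearMap.one_sub_norm_inner_apply_sq_le ha hl (hζ t)
    exact hQx.trans (mul_le_mul_of_nonneg_right hQa (sub_nonneg.mpr hQb))
  simpa only [hpb0] using hf.norm_sq_le_norm_sq_mul hg hh hf0 hg0 hle

end Complex


/- Note: `⟪ζ, T ζ⟫` (Mathlib's inner product, conjugate-linear in the first
slot) equals the vector state `⟪Tζ, ζ⟫` written in the convention of the
paper, where the inner product is linear in its first slot. -/
theorem stmt_10 {H : Type*} [NormedAddCommGroup H] [InnerProductSpace ℂ H]
    [CompleteSpace H] (a b x : H →L[ℂ] H)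
    (ha : star a * a = 1 ∧ a * star a = 1)
    (ξ : H) (hξ : ‖ξ‖ = 1) (l : ℂ) (haξ : a ξ = l • ξ)
    (hQ : ∀ ζ : H, ‖ζ‖ = 1 → (QmatOp (fun T : H →L[ℂ] H => ⟪ζ, T ζ⟫) a b x).PosSemidef) :
    ∀ η : H, ‖η‖ = 1 → ⟪ξ, η⟫ = 0 →
      ‖⟪ξ, (x - a * b) η⟫ + ⟪η, (x - b * a) ξ⟫‖ ^ 2 ≤
        (1 - ‖⟪ξ, b ξ⟫‖ ^ 2) * ‖(l • (1 : H →L[ℂ] H) - a) η‖ ^ 2 := by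
  intro η hη hξη
  have ha' : ∀ u, ‖a u‖ = ‖u‖ :=
    ContinuousLinearMap.norm_map_of_mem_unitary (Unitary.mem_iff.mpr ha)
  have hl : ‖l‖ = 1 :=
    ContinuousLinearMap.norm_eq_one_of_apply_eq_smul ha' (norm_ne_zero_iff.mp (by simp [hξ])) haξ
  have hηξ : ⟪η, ξ⟫ = 0 := inner_eq_zero_symm.mp hξη
  have key := QmatOp.norm_sq_deriv_le_of_posSemidef_along ha' hl haξ hQ
    (norm_cos_smul_add_sin_smul hξ hη hξη) (by simp) (hasDerivAt_cos_smul_add_sin_smul ξ η)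
  have hderiv : ⟪ξ, (x - a * b) η⟫ + ⟪η, (x - b * a) ξ⟫ =
      ⟪ξ, x η⟫ + ⟪η, x ξ⟫ - ((⟪ξ, a η⟫ + ⟪η, a ξ⟫) * ⟪ξ, b ξ⟫ + l * (⟪ξ, b η⟫ + ⟪η, b ξ⟫)) := by
    simp only [sub_apply, mul_apply_eq_comp, inner_sub_right, haξ, map_smul, inner_smul_right,
      ContinuousLinearMap.inner_apply_eq_mul_inner_of_apply_eq_smul ha' hl haξ, hξη, hηξ]
    ring
  rwa [hderiv, mul_comm (1 - _)]
end

section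
/- Let H be a complex Hilbert space and let a, b, x be bounded operators on H with a unitary. Let ξ ∈ H be a unit vector with aξ = λξ for some λ ∈ ℂ. Suppose that for every unit vector ζ ∈ H the matrix Q_{p_ζ} is positive semidefinite, where p_ζ is the vector state p_ζ(T) = ⟪Tζ, ζ⟫. Then for every vector η ∈ H: |⟪(x − ab)η, ξ⟫| + |⟪(x − ba)ξ, η⟫| ≤ √(1 − |⟪bξ, ξ⟫|²) · ‖(λ·I − a)η‖. -/
open scoped ComplexOrder ComplexInnerProductSpace Matrix Topology
open ComplexConjugate

theorem Matrix.PosSemidef.norm_sub_mul_sq_le {α β γ : ℂ}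
    (hQ : (!![1, α, γ; conj α, 1, β; conj γ, conj β, 1] : Matrix (Fin 3) (Fin 3) ℂ).PosSemidef) :
    ‖γ - α * β‖ ^ 2 ≤ (1 - ‖α‖ ^ 2) * (1 - ‖β‖ ^ 2) := by
  -- Congruence by `C` computes the Schur complement of the middle diagonal entry.
  set C : Matrix (Fin 3) (Fin 2) ℂ := !![1, 0; -conj α, -β; 0, 1]
  have hdet := (hQ.conjTranspose_mul_mul_same C).det_nonneg
  have hC : (Cᴴ * !![1, α, γ; conj α, 1, β; conj γ, conj β, 1] * C).det =
      (((1 - ‖α‖ ^ 2) * (1 - ‖β‖ ^ 2) - ‖γ - α * β‖ ^ 2 : ℝ) : ℂ) := by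
    simp only [C, Matrix.det_fin_two, Matrix.mul_apply, Fin.sum_univ_three,
      Matrix.conjTranspose_apply, Matrix.of_apply, Matrix.cons_val', Matrix.cons_val_zero,
      Matrix.cons_val_one, Matrix.cons_val, Matrix.cons_val_fin_one, Fin.isValue, RCLike.star_def,
      map_one, map_zero, map_neg, Complex.sq_norm, ← Complex.mul_conj, Complex.ofReal_sub,
      Complex.ofReal_mul, Complex.ofReal_one, map_sub, map_mul]
    ring
  rw [hC, Complex.zero_le_real] at hdet
  linarith

theorem Complex.exists_norm_eq_one_norm_mul_add_conj_mul (z w : ℂ) :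
    ∃ θ : ℂ, ‖θ‖ = 1 ∧ ‖θ * z + conj θ * w‖ = ‖z‖ + ‖w‖ := by
  set φ : ℝ := (w.arg - z.arg) / 2
  have hz : exp (φ * I) * z = ‖z‖ * exp (((z.arg + w.arg) / 2 : ℝ) * I) := by
    conv_lhs => rw [← norm_mul_exp_arg_mul_I z]
    rw [mul_left_comm, ← Complex.exp_add]
    congr 3
    push_cast [φ]; ring
  have hw : conj (exp (φ * I)) * w = ‖w‖ * exp (((z.arg + w.arg) / 2 : ℝ) * I) := by
    conv_lhs => rw [← norm_mul_exp_arg_mul_I w]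
    rw [← Complex.exp_conj, map_mul, conj_ofReal, conj_I, mul_left_comm, ← Complex.exp_add]
    congr 3
    push_cast [φ]; ring
  refine ⟨exp (φ * I), norm_exp_ofReal_mul_I φ, ?_⟩
  rw [hz, hw, ← add_mul, norm_mul, norm_exp_ofReal_mul_I, mul_one, ← ofReal_add, norm_real,
    Real.norm_of_nonneg (by positivity)]

theorem Complex.norm_mul_ofReal_sub_mul_sq {l : ℂ} (hl : ‖l‖ = 1) (r s : ℝ) (k : ℂ) :
    ‖l * r - s * k‖ ^ 2 = r ^ 2 - s * (r * (2 * (conj l * k).re) - s * ‖k‖ ^ 2) := by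
  rw [@norm_sub_sq ℂ ℂ]
  simp only [RCLike.inner_apply, Complex.norm_mul, Complex.norm_real, Real.norm_eq_abs, hl,
    one_mul, mul_pow, sq_abs, map_mul, Complex.conj_ofReal, RCLike.re_to_complex, Complex.mul_re,
    Complex.mul_im, Complex.ofReal_re, Complex.ofReal_im, Complex.conj_re, Complex.conj_im]
  ring

theorem nonneg_of_continuousAt_of_forall_ne {X : Type*} [TopologicalSpace X] {x : X}
    [(𝓝[≠] x).NeBot] {f : X → ℝ} (hf : ContinuousAt f x) (h : ∀ y ≠ x, 0 ≤ f y) :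
    0 ≤ f x :=
  ge_of_tendsto (hf.tendsto.mono_left (nhdsWithin_le_nhds (s := {x}ᶜ)))
    (eventually_nhdsWithin_of_forall h)

section InnerProductSpace

variable {H : Type*} [NormedAddCommGroup H] [InnerProductSpace ℂ H]

theorem norm_inner_mul_sub_sq_le_of_qmatOp_posSemidef {a b x : H →L[ℂ] H}
    (hQ : ∀ ζ : H, ‖ζ‖ = 1 → (QmatOp (fun T : H →L[ℂ] H => ⟪ζ, T ζ⟫) a b x).PosSemidef)
    (u : H) :
    ‖⟪u, x u⟫ * (‖u‖ ^ 2 : ℝ) - ⟪u, a u⟫ * ⟪u, b u⟫‖ ^ 2 ≤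
      (‖u‖ ^ 4 - ‖⟪u, a u⟫‖ ^ 2) * (‖u‖ ^ 4 - ‖⟪u, b u⟫‖ ^ 2) := by
  rcases eq_or_ne u 0 with rfl | hu
  · simp
  set ζ : H := ((‖u‖⁻¹ : ℝ) : ℂ) • u
  have hζ : ‖ζ‖ = 1 := by simp [ζ, norm_smul, hu]
  have hscale : ∀ T : H →L[ℂ] H, ⟪u, T u⟫ = ((‖u‖ ^ 2 : ℝ) : ℂ) * ⟪ζ, T ζ⟫ := by
    intro T
    have hsmul : u = ((‖u‖ : ℝ) : ℂ) • ζ := by simp [ζ, smul_smul, hu]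
    conv_lhs => rw [hsmul]
    rw [map_smul, inner_smul_left, inner_smul_right, Complex.conj_ofReal]
    push_cast; ring
  have h := mul_le_mul_of_nonneg_left (hQ ζ hζ).norm_sub_mul_sq_le (by positivity : 0 ≤ ‖u‖ ^ 8)
  beta_reduce at h
  have hfactor : ((‖u‖ ^ 2 : ℝ) : ℂ) * ⟪ζ, x ζ⟫ * ((‖u‖ ^ 2 : ℝ) : ℂ) -
      ((‖u‖ ^ 2 : ℝ) : ℂ) * ⟪ζ, a ζ⟫ * (((‖u‖ ^ 2 : ℝ) : ℂ) * ⟪ζ, b ζ⟫) =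
      ((‖u‖ ^ 4 : ℝ) : ℂ) * (⟪ζ, x ζ⟫ - ⟪ζ, a ζ⟫ * ⟪ζ, b ζ⟫) := by
    push_cast; ring
  rw [hscale a, hscale b, hscale x, hfactor]
  simp only [norm_mul, Complex.norm_real, Real.norm_eq_abs,
    abs_of_nonneg (by positivity : (0 : ℝ) ≤ ‖u‖ ^ 2),
    abs_of_nonneg (by positivity : (0 : ℝ) ≤ ‖u‖ ^ 4)]
  refine (le_of_eq ?_).trans (h.trans_eq ?_) <;> ring

theorem norm_eq_one_of_apply_eq_smul {a : H →L[ℂ] H} (ha : ∀ w, ‖a w‖ = ‖w‖) {ξ : H}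
    (hξ : ξ ≠ 0) {l : ℂ} (haξ : a ξ = l • ξ) : ‖l‖ = 1 := by
  have h := ha ξ
  rw [haξ, norm_smul] at h
  exact (mul_eq_right₀ (norm_ne_zero_iff.mpr hξ)).mp h

theorem inner_apply_eq_mul_of_apply_eq_smul {a : H →L[ℂ] H} (ha : ∀ w, ‖a w‖ = ‖w‖) {ξ : H}
    {l : ℂ} (hl : ‖l‖ = 1) (haξ : a ξ = l • ξ) (w : H) : ⟪ξ, a w⟫ = l * ⟪ξ, w⟫ := by
  calc ⟪ξ, a w⟫ = l * conj l * ⟪ξ, a w⟫ := by rw [Complex.mul_conj', hl]; simp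
    _ = l * ⟪a ξ, a w⟫ := by rw [haξ, inner_smul_left, mul_assoc]
    _ = l * ⟪ξ, w⟫ := by rw [(LinearMap.norm_map_iff_inner_map_map a).mp ha]

theorem two_mul_re_conj_mul_inner_sub_eq_norm_sq {a : H →L[ℂ] H} (ha : ∀ w, ‖a w‖ = ‖w‖)
    {l : ℂ} (hl : ‖l‖ = 1) (v : H) :
    2 * (conj l * ⟪v, (l • (1 : H →L[ℂ] H) - a) v⟫).re = ‖(l • (1 : H →L[ℂ] H) - a) v‖ ^ 2 := by
  have hKv : (l • (1 : H →L[ℂ] H) - a) v = l • v - a v := rfl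
  have hll : conj l * l = 1 := by simp [Complex.conj_mul', hl]
  have hvv : (⟪v, v⟫ : ℂ).re = ‖v‖ ^ 2 := inner_self_eq_norm_sq (𝕜 := ℂ) v
  rw [hKv, @norm_sub_sq ℂ, norm_smul, hl, ha, inner_smul_left]
  simp only [inner_sub_right, inner_smul_right, mul_sub, ← mul_assoc, hll, one_mul,
    Complex.sub_re, RCLike.re_to_complex, hvv]
  ring

theorem inner_add_smul_map_add_smul (T : H →L[ℂ] H) (ξ v : H) (t : ℝ) :
    ⟪ξ + (t : ℂ) • v, T (ξ + (t : ℂ) • v)⟫ =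
      ⟪ξ, T ξ⟫ + t * (⟪ξ, T v⟫ + ⟪v, T ξ⟫) + t ^ 2 * ⟪v, T v⟫ := by
  simp only [map_add, map_smul, inner_add_left, inner_add_right, inner_smul_left,
    inner_smul_right, Complex.conj_ofReal]
  ring

theorem inner_add_smul_apply_self_of_apply_eq_smul {a : H →L[ℂ] H} {ξ : H} {l : ℂ}
    (haξ : a ξ = l • ξ) (hξa : ∀ w, ⟪ξ, a w⟫ = l * ⟪ξ, w⟫) (v : H) (t : ℝ) :
    ⟪ξ + (t : ℂ) • v, a (ξ + (t : ℂ) • v)⟫ =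
      l * (‖ξ + (t : ℂ) • v‖ ^ 2 : ℝ) - t ^ 2 * ⟪v, (l • (1 : H →L[ℂ] H) - a) v⟫ := by
  have hKξ : (l • (1 : H →L[ℂ] H) - a) ξ = 0 := by simp [haξ]
  have hξK : ∀ w, ⟪ξ, (l • (1 : H →L[ℂ] H) - a) w⟫ = 0 := fun w => by simp [hξa]
  have hK : ⟪ξ + (t : ℂ) • v, (l • (1 : H →L[ℂ] H) - a) (ξ + (t : ℂ) • v)⟫ =
      t ^ 2 * ⟪v, (l • (1 : H →L[ℂ] H) - a) v⟫ := by
    simp only [inner_add_smul_map_add_smul, hKξ, hξK, inner_zero_right, add_zero, zero_add,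
      mul_zero]
  have hN : ⟪ξ + (t : ℂ) • v, ξ + (t : ℂ) • v⟫ = ((‖ξ + (t : ℂ) • v‖ ^ 2 : ℝ) : ℂ) := by
    rw [inner_self_eq_norm_sq_to_K]; norm_cast
  rw [← hK, sub_apply, smul_apply, one_apply_eq_self, inner_sub_right, inner_smul_right, hN,
    sub_sub_cancel]

theorem norm_pow_four_sub_norm_inner_sq_of_apply_eq_smul {a : H →L[ℂ] H}
    (ha : ∀ w, ‖a w‖ = ‖w‖) {ξ : H} {l : ℂ} (hl : ‖l‖ = 1) (haξ : a ξ = l • ξ)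
    (hξa : ∀ w, ⟪ξ, a w⟫ = l * ⟪ξ, w⟫) (v : H) (t : ℝ) :
    ‖ξ + (t : ℂ) • v‖ ^ 4 - ‖⟪ξ + (t : ℂ) • v, a (ξ + (t : ℂ) • v)⟫‖ ^ 2 =
      t ^ 2 * (‖ξ + (t : ℂ) • v‖ ^ 2 * ‖(l • (1 : H →L[ℂ] H) - a) v‖ ^ 2 -
        t ^ 2 * ‖⟪v, (l • (1 : H →L[ℂ] H) - a) v⟫‖ ^ 2) := by
  rw [inner_add_smul_apply_self_of_apply_eq_smul haξ hξa, ← Complex.ofReal_pow t,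
    Complex.norm_mul_ofReal_sub_mul_sq hl, two_mul_re_conj_mul_inner_sub_eq_norm_sq ha hl]
  ring

theorem inner_mul_norm_sq_sub_mul_of_apply_eq_smul {a b x : H →L[ℂ] H} {ξ : H} {l : ℂ}
    (haξ : a ξ = l • ξ) (hξa : ∀ w, ⟪ξ, a w⟫ = l * ⟪ξ, w⟫) (hξx : ⟪ξ, x ξ⟫ = l * ⟪ξ, b ξ⟫)
    (v : H) (t : ℝ) :
    ⟪ξ + (t : ℂ) • v, x (ξ + (t : ℂ) • v)⟫ * (‖ξ + (t : ℂ) • v‖ ^ 2 : ℝ) -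
        ⟪ξ + (t : ℂ) • v, a (ξ + (t : ℂ) • v)⟫ * ⟪ξ + (t : ℂ) • v, b (ξ + (t : ℂ) • v)⟫ =
      t * ((‖ξ + (t : ℂ) • v‖ ^ 2 : ℝ) *
          (⟪ξ, (x - a * b) v⟫ + ⟪v, (x - b * a) ξ⟫ + t * ⟪v, (x - l • b) v⟫) +
        t * ⟪v, (l • (1 : H →L[ℂ] H) - a) v⟫ * ⟪ξ + (t : ℂ) • v, b (ξ + (t : ℂ) • v)⟫) := by
  have hx : x = (x - l • b) + l • b := by abel
  have hD : ⟪ξ + (t : ℂ) • v, (x - l • b) (ξ + (t : ℂ) • v)⟫ =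
      t * (⟪ξ, (x - a * b) v⟫ + ⟪v, (x - b * a) ξ⟫ + t * ⟪v, (x - l • b) v⟫) := by
    rw [inner_add_smul_map_add_smul]
    simp only [sub_apply, smul_apply, mul_apply_eq_comp, inner_sub_right, inner_smul_right,
      map_smul, hξx, hξa, haξ, sub_self, zero_add]
    ring
  conv_lhs => rw [hx, add_apply, inner_add_right, hD, smul_apply, inner_smul_right]
  rw [inner_add_smul_apply_self_of_apply_eq_smul haξ hξa]
  ring

theorem norm_inner_sub_mul_add_inner_sub_mul_sq_le {a b x : H →L[ℂ] H}
    (hbound : ∀ u : H, ‖⟪u, x u⟫ * (‖u‖ ^ 2 : ℝ) - ⟪u, a u⟫ * ⟪u, b u⟫‖ ^ 2 ≤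
      (‖u‖ ^ 4 - ‖⟪u, a u⟫‖ ^ 2) * (‖u‖ ^ 4 - ‖⟪u, b u⟫‖ ^ 2))
    (ha : ∀ w, ‖a w‖ = ‖w‖) {ξ : H} (hξ : ‖ξ‖ = 1) {l : ℂ} (haξ : a ξ = l • ξ) (v : H) :
    ‖⟪ξ, (x - a * b) v⟫ + ⟪v, (x - b * a) ξ⟫‖ ^ 2 ≤
      (1 - ‖⟪ξ, b ξ⟫‖ ^ 2) * ‖(l • (1 : H →L[ℂ] H) - a) v‖ ^ 2 := by
  have hl := norm_eq_one_of_apply_eq_smul ha (norm_ne_zero_iff.mp (hξ ▸ one_ne_zero)) haξ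
  have hξa := inner_apply_eq_mul_of_apply_eq_smul ha hl haξ
  have hξx : ⟪ξ, x ξ⟫ = l * ⟪ξ, b ξ⟫ := by
    have h : ‖⟪ξ, x ξ⟫ - l * ⟪ξ, b ξ⟫‖ ^ 2 ≤ 0 := by
      simpa [haξ, inner_smul_right, inner_self_eq_norm_sq_to_K, hξ, hl] using hbound ξ
    simpa [sub_eq_zero] using le_antisymm h (sq_nonneg _)
  set S := ⟪ξ, (x - a * b) v⟫ + ⟪v, (x - b * a) ξ⟫
  set k := ⟪v, (l • (1 : H →L[ℂ] H) - a) v⟫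
  set M : ℝ → ℂ := fun t => (‖ξ + (t : ℂ) • v‖ ^ 2 : ℝ) * (S + t * ⟪v, (x - l • b) v⟫) +
    t * k * ⟪ξ + (t : ℂ) • v, b (ξ + (t : ℂ) • v)⟫
  set G : ℝ → ℝ := fun t => ‖ξ + (t : ℂ) • v‖ ^ 2 * ‖(l • (1 : H →L[ℂ] H) - a) v‖ ^ 2 -
    t ^ 2 * ‖k‖ ^ 2
  set f : ℝ → ℝ := fun t =>
    G t * (‖ξ + (t : ℂ) • v‖ ^ 4 - ‖⟪ξ + (t : ℂ) • v, b (ξ + (t : ℂ) • v)⟫‖ ^ 2) - ‖M t‖ ^ 2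
  -- `hbound` at `ξ + t v` reads `0 ≤ t² f t`, and `0 ≤ f 0` is the claim.
  have hf : ∀ t ≠ 0, 0 ≤ f t := by
    intro t ht
    have h := hbound (ξ + (t : ℂ) • v)
    rw [inner_mul_norm_sq_sub_mul_of_apply_eq_smul haξ hξa hξx,
      norm_pow_four_sub_norm_inner_sq_of_apply_eq_smul ha hl haξ hξa, norm_mul, Complex.norm_real,
      Real.norm_eq_abs, mul_pow, sq_abs] at h
    have h' : 0 ≤ t ^ 2 * f t := by
      simp only [f, G, M, S, k]
      linarith
    exact nonneg_of_mul_nonneg_right h' (by positivity)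
  have hf0 := nonneg_of_continuousAt_of_forall_ne (by fun_prop) hf
  simp only [f, G, M, Complex.ofReal_zero, zero_smul, add_zero, hξ, zero_mul, one_pow,
    ne_eq, OfNat.ofNat_ne_zero, not_false_eq_true, zero_pow, sub_zero, Complex.ofReal_one,
    one_mul] at hf0
  linarith

end InnerProductSpace

/- Note: `⟪ζ, T ζ⟫` (Mathlib's inner product, conjugate-linear in the first
slot) equals the vector state `⟪Tζ, ζ⟫` written in the convention of the
paper, where the inner product is linear in its first slot. -/
theorem stmt_11 {H : Type*} [NormedAddCommGroup H] [InnerProductSpace ℂ H]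
    [CompleteSpace H] (a b x : H →L[ℂ] H)
    (ha : star a * a = 1 ∧ a * star a = 1)
    (ξ : H) (hξ : ‖ξ‖ = 1) (l : ℂ) (haξ : a ξ = l • ξ)
    (hQ : ∀ ζ : H, ‖ζ‖ = 1 → (QmatOp (fun T : H →L[ℂ] H => ⟪ζ, T ζ⟫) a b x).PosSemidef) :
    ∀ η : H,
      ‖⟪ξ, (x - a * b) η⟫‖ + ‖⟪η, (x - b * a) ξ⟫‖ ≤
        Real.sqrt (1 - ‖⟪ξ, b ξ⟫‖ ^ 2) * ‖(l • (1 : H →L[ℂ] H) - a) η‖ := by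
  have hisom := ContinuousLinearMap.norm_map_of_mem_unitary (Unitary.mem_iff.mpr ha)
  intro η
  obtain ⟨θ, hθ, hphase⟩ := Complex.exists_norm_eq_one_norm_mul_add_conj_mul
    ⟪ξ, (x - a * b) η⟫ ⟪η, (x - b * a) ξ⟫
  have h := norm_inner_sub_mul_add_inner_sub_mul_sq_le
    (norm_inner_mul_sub_sq_le_of_qmatOp_posSemidef hQ) hisom hξ haξ (θ • η)
  rw [map_smul, map_smul, inner_smul_right, inner_smul_left, hphase, norm_smul, hθ,
    one_mul] at h
  calc ‖⟪ξ, (x - a * b) η⟫‖ + ‖⟪η, (x - b * a) ξ⟫‖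
      ≤ √((1 - ‖⟪ξ, b ξ⟫‖ ^ 2) * ‖(l • (1 : H →L[ℂ] H) - a) η‖ ^ 2) :=
        (le_abs_self _).trans (Real.abs_le_sqrt h)
    _ = √(1 - ‖⟪ξ, b ξ⟫‖ ^ 2) * ‖(l • (1 : H →L[ℂ] H) - a) η‖ := by
        rw [Real.sqrt_mul' _ (sq_nonneg _), Real.sqrt_sq (norm_nonneg _)]
end

section
/- Let a, b, x ∈ Mₙ(ℂ) where a is the diagonal unitary matrix diag(λ₁, …, λₙ), b = (b_{jk}), x = (x_{jk}). Suppose that for every unit vector ζ ∈ ℂⁿ the matrix Q_{p_ζ} is positive semidefinite, where p_ζ is the vector state p_ζ(M) = ⟪Mζ, ζ⟫. Then for every j ∈ {1, …, n} and all real numbers r₁, …, rₙ and φ₁, …, φₙ: |Σ_{k=1}^{n} r_k · (e^{iφ_k}(x_{jk} − λ_j b_{jk}) + e^{−iφ_k}(x_{kj} − λ_j b_{kj}))|² ≤ (1 − |b_{jj}|²) · Σ_{k=1}^{n} r_k² |λ_j − λ_k|². -/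
/-!
Perturb the `j`-th basis vector along `η_k = r_k e^{iφ_k}`. Positivity of `Q_p` gives
`|p(x) - p(a) p(b)|² ≤ (1 - |p(a)|²)(1 - |p(b)|²)` for every vector state `p`. For the states
of `e_j + t η`, with the normalisation cleared, this is an inequality between polynomials in `t`.
Since `|λ_j| = 1` its right side vanishes at `t = 0`, forcing `x_jj = λ_j b_jj`; both sides are
then `O(t²)`, and comparing the coefficients of `t²` gives the claim.
-/

open Matrix
open scoped ComplexOrder

open ComplexConjugate

theorem sq_sub_norm_mul_add_sq {z : ℂ} (hz : ‖z‖ = 1) (m s : ℝ) (δ : ℂ) :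
    m ^ 2 - ‖z * m + s ^ 2 * δ‖ ^ 2 = -s ^ 2 * (2 * m * (z * conj δ).re + s ^ 2 * ‖δ‖ ^ 2) := by
  have hz' : z.re * z.re + z.im * z.im = 1 := by
    rw [← Complex.normSq_apply, Complex.normSq_eq_norm_sq, hz, one_pow]
  simp only [← Complex.normSq_eq_norm_sq, Complex.normSq_apply]
  simp only [sq, Complex.add_re,
    Complex.add_im, Complex.mul_re, Complex.mul_im, Complex.ofReal_re, Complex.ofReal_im,
    Complex.conj_re, Complex.conj_im]
  linear_combination (-m ^ 2) * hz'

theorem norm_sub_sq_eq_of_norm_eq_one {z w : ℂ} (hz : ‖z‖ = 1) (hw : ‖w‖ = 1) :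
    ‖z - w‖ ^ 2 = -2 * (z * conj (w - z)).re := by
  rw [← Complex.normSq_eq_norm_sq, Complex.normSq_sub, map_sub, mul_sub, Complex.sub_re,
    Complex.mul_conj, Complex.normSq_eq_norm_sq, Complex.normSq_eq_norm_sq, hz, hw, one_pow,
    Complex.ofReal_one, Complex.one_re]
  ring

theorem norm_sub_mul_sq_le_of_forall_curve {m : ℝ → ℝ} {pa pb px : ℝ → ℂ}
    {z δ b₀ b₁ b₂ x₀ x₁ x₂ : ℂ} {μ₁ μ₂ : ℝ} (hz : ‖z‖ = 1)
    (hm : ∀ t, m t = 1 + t * μ₁ + t ^ 2 * μ₂) (ha : ∀ t, pa t = z * m t + t ^ 2 * δ)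
    (hb : ∀ t, pb t = b₀ + t * b₁ + t ^ 2 * b₂) (hx : ∀ t, px t = x₀ + t * x₁ + t ^ 2 * x₂)
    (h : ∀ t, ‖m t * px t - pa t * pb t‖ ^ 2 ≤ (m t ^ 2 - ‖pa t‖ ^ 2) * (m t ^ 2 - ‖pb t‖ ^ 2)) :
    ‖x₁ - z * b₁‖ ^ 2 ≤ -2 * (z * conj δ).re * (1 - ‖b₀‖ ^ 2) := by
  have hm0 : m 0 = 1 := by simp [hm]
  have hx₀ : x₀ = z * b₀ := by
    simpa [hm0, ha, hb, hx, hz, sub_eq_zero] using h 0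
  -- `F t` and `G t` are `(m px - pa pb) / t` and `(m² - ‖pa‖²) / t²`, continued through `t = 0`.
  set F : ℝ → ℂ := fun t => m t * (x₁ - z * b₁ + t * (x₂ - z * b₂)) - t * δ * pb t
  set G : ℝ → ℝ := fun t => -(2 * m t * (z * conj δ).re + t ^ 2 * ‖δ‖ ^ 2)
  have hF : ∀ t, m t * px t - pa t * pb t = t * F t := by
    intro t
    simp only [F, ha, hb, hx, hx₀]
    ring
  have key : ∀ t ≠ 0, ‖F t‖ ^ 2 ≤ G t * (m t ^ 2 - ‖pb t‖ ^ 2) := by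
    intro t ht
    have h1 := h t
    rw [hF, ha, sq_sub_norm_mul_add_sq hz, norm_mul, Complex.norm_real, mul_pow,
      Real.norm_eq_abs, sq_abs] at h1
    exact le_of_mul_le_mul_left (h1.trans_eq (by ring)) (by positivity)
  have hmc : Continuous m := by rw [funext hm]; fun_prop
  have hbc : Continuous pb := by rw [funext hb]; fun_prop
  have := le_on_closure (s := {0}ᶜ) key (by fun_prop) (by fun_prop) (x := 0) (by simp)
  simpa [F, G, hm0, hb] using this

theorem norm_sub_mul_sq_le_of_posSemidef_QmatOp {B : Type*} {p : B → ℂ} {a b x : B}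
    (h : (QmatOp p a b x).PosSemidef) :
    ‖p x - p a * p b‖ ^ 2 ≤ (1 - ‖p a‖ ^ 2) * (1 - ‖p b‖ ^ 2) := by
  -- `Sᴴ Q S` is the Schur complement of the middle entry, padded to a `2 × 2` matrix.
  set S : Matrix (Fin 3) (Fin 2) ℂ := !![1, 0; -conj (p a), -p b; 0, 1]
  have hdet := (h.conjTranspose_mul_mul_same S).det_nonneg
  have hS : Sᴴ * QmatOp p a b x * S = !![1 - p a * conj (p a), p x - p a * p b;
      conj (p x - p a * p b), 1 - p b * conj (p b)] := by
    ext i k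
    fin_cases i <;> fin_cases k <;>
      simp [S, QmatOp, Matrix.mul_apply, Fin.sum_univ_three] <;> ring
  rw [hS, det_fin_two_of, Complex.mul_conj, Complex.mul_conj, Complex.mul_conj] at hdet
  simp only [Complex.normSq_eq_norm_sq] at hdet
  exact_mod_cast sub_nonneg.mp hdet

section VectorState

variable {ι : Type*} [Fintype ι]

-- `p_ζ(M) = ⟪Mζ, ζ⟫`, the inner product being linear in its first slot.
def vectorState (ζ : ι → ℂ) (M : Matrix ι ι ℂ) : ℂ := star ζ ⬝ᵥ M *ᵥ ζ

theorem vectorState_smul (c : ℂ) (ζ : ι → ℂ) (M : Matrix ι ι ℂ) :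
    vectorState (c • ζ) M = c * conj c * vectorState ζ M := by
  simp only [vectorState, star_smul, mulVec_smul, smul_dotProduct, dotProduct_smul, smul_eq_mul,
    RCLike.star_def]
  ring

theorem norm_mul_sub_mul_sq_le_of_vectorState {a b x : Matrix ι ι ℂ}
    (hQ : ∀ ζ : ι → ℂ, star ζ ⬝ᵥ ζ = 1 → (QmatOp (vectorState ζ) a b x).PosSemidef)
    {w : ι → ℂ} {m : ℝ} (hw : star w ⬝ᵥ w = m) :
    ‖m * vectorState w x - vectorState w a * vectorState w b‖ ^ 2 ≤
      (m ^ 2 - ‖vectorState w a‖ ^ 2) * (m ^ 2 - ‖vectorState w b‖ ^ 2) := by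
  rcases (Complex.zero_le_real.mp (hw ▸ dotProduct_star_self_nonneg w)).eq_or_lt with hm | hm
  · obtain rfl : w = 0 := dotProduct_star_self_eq_zero.mp (by rw [hw, ← hm]; simp)
    simp [vectorState, ← hm]
  have hc : ((√m)⁻¹ : ℂ) * conj ((√m)⁻¹ : ℂ) = (m⁻¹ : ℝ) := by
    rw [← Complex.ofReal_inv, Complex.conj_ofReal, ← Complex.ofReal_mul, ← mul_inv,
      Real.mul_self_sqrt hm.le]
  have hunit : star (((√m)⁻¹ : ℂ) • w) ⬝ᵥ (((√m)⁻¹ : ℂ) • w) = 1 := by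
    simp only [star_smul, smul_dotProduct, dotProduct_smul, smul_eq_mul, RCLike.star_def]
    rw [← mul_assoc, hc, hw, ← Complex.ofReal_mul, inv_mul_cancel₀ hm.ne', Complex.ofReal_one]
  have h := norm_sub_mul_sq_le_of_posSemidef_QmatOp (hQ _ hunit)
  simp only [vectorState_smul, hc] at h
  rw [show ((m⁻¹ : ℝ) : ℂ) * vectorState w x - (m⁻¹ : ℝ) * vectorState w a *
      ((m⁻¹ : ℝ) * vectorState w b) = ((m ^ 2)⁻¹ : ℝ) *
      (m * vectorState w x - vectorState w a * vectorState w b) by push_cast; field_simp] at h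
  simp only [norm_mul, Complex.norm_real, Real.norm_of_nonneg (inv_nonneg.mpr hm.le),
    Real.norm_of_nonneg (inv_nonneg.mpr (sq_nonneg m))] at h
  field_simp at h ⊢
  exact h

variable [DecidableEq ι]

theorem vectorState_diagonal (v d : ι → ℂ) :
    vectorState v (diagonal d) = ∑ k, ‖v k‖ ^ 2 * d k := by
  simp only [vectorState, mulVec_diagonal, dotProduct, Pi.star_apply, RCLike.star_def]
  refine Finset.sum_congr rfl fun k _ => ?_
  rw [← mul_assoc, mul_comm _ (d k), mul_assoc, Complex.conj_mul']
  ring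

theorem vectorState_single_add_smul (j : ι) (v : ι → ℂ) (t : ℝ) (M : Matrix ι ι ℂ) :
    vectorState (Pi.single j 1 + (t : ℂ) • v) M =
      M j j + t * ∑ k, (M j k * v k + conj (v k) * M k j) + t ^ 2 * vectorState v M := by
  simp only [vectorState, star_add, star_smul, mulVec_add, mulVec_smul, add_dotProduct,
    dotProduct_add, smul_dotProduct, dotProduct_smul, smul_eq_mul, RCLike.star_def,
    Complex.conj_ofReal, Finset.sum_add_distrib, Pi.star_single, star_one, single_dotProduct,
    mulVec_single_one, one_mul]
  simp only [dotProduct, mulVec, Pi.star_apply, RCLike.star_def, col_apply]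
  ring

theorem vectorState_single_add_smul_diagonal (j : ι) (v d : ι → ℂ) (t : ℝ) :
    vectorState (Pi.single j 1 + (t : ℂ) • v) (diagonal d) =
      d j * (1 + t * (2 * (v j).re : ℝ)) + t ^ 2 * ∑ k, ‖v k‖ ^ 2 * d k := by
  rw [vectorState_single_add_smul, vectorState_diagonal]
  simp only [diagonal_apply_eq, diagonal_apply, ite_mul, mul_ite, zero_mul, mul_zero,
    Finset.sum_add_distrib, Finset.sum_ite_eq, Finset.sum_ite_eq', Finset.mem_univ, if_true,
    Complex.ofReal_mul, Complex.ofReal_ofNat, Complex.re_eq_add_conj]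
  ring

theorem norm_eq_one_of_diagonal_unitary {d : ι → ℂ} (h : (diagonal d)ᴴ * diagonal d = 1)
    (k : ι) : ‖d k‖ = 1 := by
  have hk := congrFun (congrFun h k) k
  simp only [diagonal_conjTranspose, diagonal_mul_diagonal, diagonal_apply_eq, one_apply_eq,
    Pi.star_apply, RCLike.star_def, Complex.conj_mul'] at hk
  exact (pow_eq_one_iff_of_nonneg (norm_nonneg _) two_ne_zero).mp (by exact_mod_cast hk)

theorem norm_sum_sq_le_of_diagonal {a b x : Matrix ι ι ℂ} {lam : ι → ℂ}
    (hQ : ∀ ζ : ι → ℂ, star ζ ⬝ᵥ ζ = 1 → (QmatOp (vectorState ζ) a b x).PosSemidef)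
    (ha : a = diagonal lam) (hlam : ∀ k, ‖lam k‖ = 1) (j : ι) (η : ι → ℂ) :
    ‖∑ k, ((x j k - lam j * b j k) * η k + conj (η k) * (x k j - lam j * b k j))‖ ^ 2 ≤
      (1 - ‖b j j‖ ^ 2) * ∑ k, ‖η k‖ ^ 2 * ‖lam j - lam k‖ ^ 2 := by
  subst ha
  set w : ℝ → ι → ℂ := fun t => Pi.single j 1 + (t : ℂ) • η
  set m : ℝ → ℝ := fun t => 1 + t * (2 * (η j).re) + t ^ 2 * ∑ k, ‖η k‖ ^ 2
  have hw : ∀ t, star (w t) ⬝ᵥ w t = m t := by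
    intro t
    have h1 := vectorState_single_add_smul_diagonal j η (fun _ => 1) t
    rw [diagonal_one] at h1
    simp only [vectorState, one_mulVec, one_mul, mul_one] at h1
    rw [h1]
    push_cast [m]
    ring
  have ha : ∀ t, vectorState (w t) (diagonal lam) =
      lam j * m t + t ^ 2 * ∑ k, ‖η k‖ ^ 2 * (lam k - lam j) := by
    intro t
    simp only [w, m, vectorState_single_add_smul_diagonal, mul_sub, Finset.sum_sub_distrib,
      ← Finset.sum_mul]
    push_cast
    ring
  have key := norm_sub_mul_sq_le_of_forall_curve (hlam j) (fun t => rfl) ha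
    (fun t => vectorState_single_add_smul j η t b) (fun t => vectorState_single_add_smul j η t x)
    (fun t => norm_mul_sub_mul_sq_le_of_vectorState hQ (hw t))
  rw [mul_comm]
  convert key using 3
  · simp only [Finset.mul_sum, ← Finset.sum_sub_distrib]
    exact Finset.sum_congr rfl fun k _ => by ring
  · simp only [map_sum, map_mul, map_pow, Complex.conj_ofReal, Finset.mul_sum, Complex.re_sum]
    refine Finset.sum_congr rfl fun k _ => ?_
    rw [norm_sub_sq_eq_of_norm_eq_one (hlam j) (hlam k), mul_left_comm (lam j),
      ← Complex.ofReal_pow, Complex.re_ofReal_mul]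
    ring

end VectorState

theorem stmt_12 {n : ℕ} (lam : Fin n → ℂ) (a b x : Matrix (Fin n) (Fin n) ℂ)
    (ha_diag : a = Matrix.diagonal lam)
    (ha_unitary : aᴴ * a = 1 ∧ a * aᴴ = 1)
    (hQ : ∀ ζ : Fin n → ℂ, star ζ ⬝ᵥ ζ = 1 →
      (QmatOp (fun M : Matrix (Fin n) (Fin n) ℂ => star ζ ⬝ᵥ M.mulVec ζ)
        a b x).PosSemidef) :
    ∀ (j : Fin n) (r φ : Fin n → ℝ),
      ‖∑ k, (r k : ℂ) *
          (Complex.exp (Complex.I * (φ k : ℂ)) * (x j k - lam j * b j k) +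
           Complex.exp (-(Complex.I * (φ k : ℂ))) * (x k j - lam j * b k j))‖ ^ 2 ≤
        (1 - ‖b j j‖ ^ 2) *
          ∑ k, (r k) ^ 2 * ‖lam j - lam k‖ ^ 2 := by
  intro j r φ
  have hlam := norm_eq_one_of_diagonal_unitary (ha_diag ▸ ha_unitary.1)
  convert norm_sum_sq_le_of_diagonal hQ ha_diag hlam j
    (fun k => r k * Complex.exp (Complex.I * φ k)) using 4 with k _ k _
  · rw [map_mul, Complex.conj_ofReal, ← Complex.exp_conj, map_mul, Complex.conj_I,
      Complex.conj_ofReal, neg_mul]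
    ring
  · simp [Complex.norm_exp]
end

section
/- Let G be a finite group and let a, b, x ∈ G be such that the matrix Q_p is positive semidefinite for every state p on G. Then there exist natural numbers s and t such that x = aˢ * b * aᵗ. -/
open scoped ComplexOrder

/-- The 3×3 matrix `Q_p` associated with `a, b, x` and a state `p`. -/
def Qmat {G : Type*} [Group G] (p : G → ℂ) (a b x : G) :
    Matrix (Fin 3) (Fin 3) ℂ :=
  !![1, p a, p x;
     (starRingEnd ℂ) (p a), 1, p b;
     (starRingEnd ℂ) (p x), (starRingEnd ℂ) (p b), 1]

section Aux

open Complex Finset Matrix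

lemma aux_psd_smul {n : Type*} [Fintype n] {M : Matrix n n ℂ} (hM : M.PosSemidef) {r : ℝ}
    (hr : 0 ≤ r) : ((r : ℂ) • M).PosSemidef := by
  refine Matrix.PosSemidef.of_dotProduct_mulVec_nonneg ?_ ?_
  · unfold Matrix.IsHermitian
    rw [Matrix.conjTranspose_smul, hM.1]
    congr 1
    simp [Complex.ext_iff]
  · intro v
    have h := hM.dotProduct_mulVec_nonneg v
    rw [Matrix.smul_mulVec, dotProduct_smul]
    exact mul_nonneg (Complex.zero_le_real.2 hr) h

lemma aux_state_of_fn {G : Type*} [Group G] (H : Subgroup G) [Fintype (G ⧸ H)]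
    (f : G ⧸ H → ℂ) (hf : (∑ c : G ⧸ H, (starRingEnd ℂ) (f c) * f c) ≠ 0) :
    IsStateFn (fun g : G => (∑ c : G ⧸ H, (starRingEnd ℂ) (f c) * f (g⁻¹ • c)) /
      (∑ c : G ⧸ H, (starRingEnd ℂ) (f c) * f c)) := by
  set d : ℂ := ∑ c : G ⧸ H, (starRingEnd ℂ) (f c) * f c with hd
  have hd0 : 0 ≤ d := Finset.sum_nonneg fun c _ => star_mul_self_nonneg (f c)
  have hdre : d = (d.re : ℂ) := by
    rw [Complex.nonneg_iff] at hd0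
    exact (Complex.ext (by simp) (by simpa using hd0.2.symm))
  have hdrenn : 0 ≤ d.re := (Complex.nonneg_iff.1 hd0).1
  constructor
  · intro n g
    set A : Matrix (G ⧸ H) (Fin n) ℂ := Matrix.of fun c j => f ((g j)⁻¹ • c) with hA
    have key : (Matrix.of fun j k : Fin n =>
        (∑ c : G ⧸ H, (starRingEnd ℂ) (f c) * f (((g j)⁻¹ * g k)⁻¹ • c)) / d)
        = ((d.re⁻¹ : ℝ) : ℂ) • (Aᴴ * A) := by
      ext j k
      have hsum : (∑ c : G ⧸ H, (starRingEnd ℂ) (f c) * f (((g j)⁻¹ * g k)⁻¹ • c))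
          = ∑ c : G ⧸ H, (starRingEnd ℂ) (f ((g j)⁻¹ • c)) * f ((g k)⁻¹ • c) := by
        refine Fintype.sum_bijective (fun c => (g j) • c) (MulAction.bijective _) _ _ ?_
        intro c
        simp [smul_smul, mul_assoc, _root_.mul_inv_rev]
      simp only [Matrix.of_apply, Matrix.smul_apply, Matrix.mul_apply, Matrix.conjTranspose_apply,
        hA, hsum]
      rw [div_eq_mul_inv, mul_comm]
      have hinv : d⁻¹ = ((d.re⁻¹ : ℝ) : ℂ) := by
        conv_lhs => rw [hdre]
        push_cast
        ring
      rw [hinv]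
      rfl
    exact key ▸ aux_psd_smul (Matrix.posSemidef_conjTranspose_mul_self A) (inv_nonneg.2 hdrenn)
  · simp only [inv_one, one_smul]
    exact div_self hf

lemma aux_px_eq_pb {G : Type*} [Group G] {p : G → ℂ} {a b x : G}
    (h : (Qmat p a b x).PosSemidef) (ha : p a = 1) : p x = p b := by
  by_contra hne
  set d : ℂ := p x - p b with hd
  have hd0 : d ≠ 0 := sub_ne_zero.2 hne
  have hns : (Complex.normSq d : ℂ) ≠ 0 := by simpa using hd0
  set t : ℂ := -(d / (Complex.normSq d : ℂ)) with ht
  have h2 := h.dotProduct_mulVec_nonneg ![t, -t, 1]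
  have e1 : (starRingEnd ℂ) t * d = -1 := by
    have hct : (starRingEnd ℂ) t = -((starRingEnd ℂ) d / (Complex.normSq d : ℂ)) := by
      rw [ht]; simp [Complex.conj_ofReal]
    rw [hct]
    have : -((starRingEnd ℂ) d / (Complex.normSq d : ℂ)) * d
        = -(((starRingEnd ℂ) d * d) / (Complex.normSq d : ℂ)) := by ring
    rw [this, ← Complex.normSq_eq_conj_mul_self, div_self hns]
  have e2 : t * (starRingEnd ℂ) d = -1 := by
    rw [ht]
    have : -(d / (Complex.normSq d : ℂ)) * (starRingEnd ℂ) d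
        = -((d * (starRingEnd ℂ) d) / (Complex.normSq d : ℂ)) := by ring
    rw [this, Complex.mul_conj, div_self hns]
  rw [map_sub] at e2
  have hval : star ![t, -t, 1] ⬝ᵥ (Qmat p a b x) *ᵥ ![t, -t, 1] = -1 := by
    simp [Qmat, dotProduct, Matrix.mulVec, Fin.sum_univ_three, ha,
      Matrix.cons_val_zero, Matrix.cons_val_one, Matrix.head_cons]
    linear_combination e1 + e2
  rw [hval] at h2
  rw [Complex.nonneg_iff] at h2
  norm_num at h2

end Aux

open Complex Finset

theorem stmt_15 {G : Type*} [Group G] [Finite G] (a b x : G)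
    (hQ : ∀ p : G → ℂ, IsStateFn p → (Qmat p a b x).PosSemidef) :
    ∃ s t : ℕ, x = a ^ s * b * a ^ t := by
  classical
  by_contra hcon
  push_neg at hcon
  set H : Subgroup G := Subgroup.zpowers a with hH
  letI : Fintype (G ⧸ H) := Fintype.ofFinite _
  have hmem : ∀ g : G, g ∈ H → ∃ s : ℕ, g = a ^ s := fun g hg => by
    obtain ⟨s, hs⟩ := mem_powers_iff_mem_zpowers.2 hg
    exact ⟨s, hs.symm⟩
  have haH : a ∈ H := Subgroup.mem_zpowers a
  -- the double coset H x H as a predicate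
  set D : G → Prop := fun g => ∃ h₁ ∈ H, ∃ h₂ ∈ H, g = h₁ * x * h₂ with hDdef
  have hDx : D x := ⟨1, one_mem _, 1, one_mem _, by simp⟩
  have hDb : ¬ D b := by
    rintro ⟨h₁, m₁, h₂, m₂, heq⟩
    obtain ⟨s, hs⟩ := hmem h₁⁻¹ (inv_mem m₁)
    obtain ⟨t, htt⟩ := hmem h₂⁻¹ (inv_mem m₂)
    refine hcon s t ?_
    rw [← hs, ← htt, heq]
    group
  have hDr : ∀ g h : G, D g → h ∈ H → D (g * h) := by
    rintro g h ⟨h₁, m₁, h₂, m₂, heq⟩ hh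
    exact ⟨h₁, m₁, h₂ * h, mul_mem m₂ hh, by rw [heq]; group⟩
  have hDl : ∀ h g : G, h ∈ H → D g → D (h * g) := by
    rintro h g hh ⟨h₁, m₁, h₂, m₂, heq⟩
    exact ⟨h * h₁, mul_mem hh m₁, h₂, m₂, by rw [heq]; group⟩
  have hDH : ∀ g : G, g ∈ H → D g → x ∈ H := by
    rintro g hg ⟨h₁, m₁, h₂, m₂, heq⟩
    have hx' : x = h₁⁻¹ * g * h₂⁻¹ := by rw [heq]; group
    rw [hx']
    exact mul_mem (mul_mem (inv_mem m₁) hg) (inv_mem m₂)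
  -- the orbit predicate on the quotient
  set cO : G ⧸ H → Prop := fun c => ∃ g : G, D g ∧ (g : G ⧸ H) = c with hcOdef
  have hcO : ∀ g : G, cO (g : G ⧸ H) ↔ D g := by
    intro g
    constructor
    · rintro ⟨g', hg', he⟩
      have hmem' : g'⁻¹ * g ∈ H := QuotientGroup.eq.1 he
      have := hDr g' (g'⁻¹ * g) hg' hmem'
      simpa [mul_assoc] using this
    · exact fun h => ⟨g, h, rfl⟩
  have hsm : ∀ g c : G, g • ((c : G ⧸ H)) = ((g * c : G) : G ⧸ H) := fun g c =>
    MulAction.Quotient.smul_mk H g c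
  have hcoe : ∀ g : G, (g : G ⧸ H) = ((1 : G) : G ⧸ H) ↔ g ∈ H := by
    intro g
    rw [QuotientGroup.eq]
    simp
  -- the family of vectors and associated functions
  set f : ℂ → (G ⧸ H) → ℂ := fun ε c =>
    (if c = ((1 : G) : G ⧸ H) then 1 else 0) + ε * (if cO c then 1 else 0) with hfdef
  set S : ℂ → G → ℂ := fun ε g => ∑ c : G ⧸ H, (starRingEnd ℂ) (f ε c) * f ε (g⁻¹ • c)
    with hSdef
  set N : G → ℕ := fun g =>
    (Finset.univ.filter (fun c : G ⧸ H => cO c ∧ cO (g⁻¹ • c))).card with hNdef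
  -- central computation of S
  have hS : ∀ (ε : ℂ) (g : G), S ε g =
      (if g ∈ H then 1 else 0) + ε * (if D g⁻¹ then 1 else 0)
      + (starRingEnd ℂ) ε * (if D g then 1 else 0)
      + (starRingEnd ℂ) ε * ε * (N g : ℂ) := by
    intro ε g
    have expand : ∀ c : G ⧸ H, (starRingEnd ℂ) (f ε c) * f ε (g⁻¹ • c) =
        (if c = ((1 : G) : G ⧸ H) then 1 else 0) * (if g⁻¹ • c = ((1 : G) : G ⧸ H) then 1 else 0)
        + ε * ((if c = ((1 : G) : G ⧸ H) then 1 else 0) * (if cO (g⁻¹ • c) then 1 else 0))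
        + (starRingEnd ℂ) ε *
            ((if cO c then 1 else 0) * (if g⁻¹ • c = ((1 : G) : G ⧸ H) then 1 else 0))
        + (starRingEnd ℂ) ε * ε *
            ((if cO c then 1 else 0) * (if cO (g⁻¹ • c) then 1 else 0)) := by
      intro c
      have c1 : (starRingEnd ℂ) (if c = ((1 : G) : G ⧸ H) then (1:ℂ) else 0)
          = (if c = ((1 : G) : G ⧸ H) then (1:ℂ) else 0) := by
        split_ifs <;> simp
      have c2 : (starRingEnd ℂ) (if cO c then (1:ℂ) else 0)
          = (if cO c then (1:ℂ) else 0) := by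
        split_ifs <;> simp
      simp only [hfdef, map_add, map_mul, c1, c2]
      ring
    rw [hSdef]
    simp only []
    rw [Finset.sum_congr rfl (fun c _ => expand c)]
    rw [Finset.sum_add_distrib, Finset.sum_add_distrib, Finset.sum_add_distrib,
      ← Finset.mul_sum, ← Finset.mul_sum, ← Finset.mul_sum]
    have p1 : (∑ c : G ⧸ H, (if c = ((1 : G) : G ⧸ H) then (1:ℂ) else 0)
        * (if g⁻¹ • c = ((1 : G) : G ⧸ H) then 1 else 0)) = (if g ∈ H then 1 else 0) := by
      rw [Fintype.sum_eq_single ((1 : G) : G ⧸ H)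
        (fun c hc => by rw [if_neg hc, zero_mul])]
      rw [if_pos rfl, one_mul, hsm, mul_one]
      have : ((g⁻¹ : G) : G ⧸ H) = ((1 : G) : G ⧸ H) ↔ g ∈ H := by
        rw [hcoe]; exact ⟨fun h => by simpa using inv_mem h, fun h => inv_mem h⟩
      simp only [this]
    have p2 : (∑ c : G ⧸ H, (if c = ((1 : G) : G ⧸ H) then (1:ℂ) else 0)
        * (if cO (g⁻¹ • c) then 1 else 0)) = (if D g⁻¹ then 1 else 0) := by
      rw [Fintype.sum_eq_single ((1 : G) : G ⧸ H)
        (fun c hc => by rw [if_neg hc, zero_mul])]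
      rw [if_pos rfl, one_mul, hsm, mul_one]
      simp only [hcO]
    have p3 : (∑ c : G ⧸ H, (if cO c then (1:ℂ) else 0)
        * (if g⁻¹ • c = ((1 : G) : G ⧸ H) then 1 else 0)) = (if D g then 1 else 0) := by
      rw [Fintype.sum_eq_single ((g : G) : G ⧸ H) (fun c hc => by
        have hnot : ¬ (g⁻¹ • c = ((1 : G) : G ⧸ H)) := by
          intro hcc
          apply hc
          have := congrArg (fun z => g • z) hcc
          simpa [smul_smul, hsm] using this
        rw [if_neg hnot, mul_zero])]
      have hgc : g⁻¹ • ((g : G) : G ⧸ H) = ((1 : G) : G ⧸ H) := by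
        rw [hsm]; simp
      rw [hgc, if_pos rfl, mul_one]
      simp only [hcO]
    have p4 : (∑ c : G ⧸ H, (if cO c then (1:ℂ) else 0)
        * (if cO (g⁻¹ • c) then 1 else 0)) = (N g : ℂ) := by
      rw [hNdef]
      simp only []
      rw [← Finset.sum_boole]
      refine Finset.sum_congr rfl fun c _ => ?_
      by_cases h1 : cO c <;> by_cases h2 : cO (g⁻¹ • c) <;>
        simp [h1, h2]
    rw [p1, p2, p3, p4]
  -- the denominator is S ε 1
  have hS1eq : ∀ ε : ℂ, (∑ c : G ⧸ H, (starRingEnd ℂ) (f ε c) * f ε c) = S ε 1 := by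
    intro ε
    rw [hSdef]
    simp
  have h1H : (1 : G) ∈ H := one_mem _
  by_cases hx : x ∈ H
  · -- the degenerate case x ∈ ⟨a⟩
    have hS0 : ∀ g : G, S 0 g = (if g ∈ H then 1 else 0) := by
      intro g
      rw [hS]
      simp
    have hf0 : (∑ c : G ⧸ H, (starRingEnd ℂ) (f 0 c) * f 0 c) ≠ 0 := by
      rw [hS1eq, hS0, if_pos h1H]
      exact one_ne_zero
    have hstate := aux_state_of_fn H (f 0) hf0
    have hpsd := hQ _ hstate
    have hpa : (fun g : G => (∑ c : G ⧸ H, (starRingEnd ℂ) (f 0 c) * f 0 (g⁻¹ • c)) /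
        (∑ c : G ⧸ H, (starRingEnd ℂ) (f 0 c) * f 0 c)) a = 1 := by
      show S 0 a / (∑ c : G ⧸ H, (starRingEnd ℂ) (f 0 c) * f 0 c) = 1
      rw [hS1eq, hS0, hS0, if_pos h1H, if_pos haH]
      norm_num
    have hpe := aux_px_eq_pb hpsd hpa
    have hpe' : S 0 x / S 0 1 = S 0 b / S 0 1 := by
      rw [← hS1eq 0]
      exact hpe
    have hbH : b ∈ H := by
      by_contra hb
      rw [hS0, hS0, hS0, if_pos hx, if_pos h1H, if_neg hb] at hpe'
      norm_num at hpe'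
    obtain ⟨s, hs⟩ := hmem (x * b⁻¹) (mul_mem hx (inv_mem hbH))
    refine hcon s 0 ?_
    rw [pow_zero, mul_one, ← hs]
    group
  · -- the main case x ∉ ⟨a⟩
    have hD1 : ¬ D 1 := fun h => hx (hDH 1 h1H h)
    have hDa : ¬ D a := fun h => hx (hDH a haH h)
    have hDainv : ¬ D a⁻¹ := fun h => hx (hDH a⁻¹ (inv_mem haH) h)
    have hNa : N a = N 1 := by
      rw [hNdef]
      simp only []
      congr 1
      apply Finset.filter_congr
      intro c _
      have hiff : cO (a⁻¹ • c) ↔ cO c := by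
        refine QuotientGroup.induction_on c fun g => ?_
        rw [hsm, hcO, hcO]
        constructor
        · intro h
          have := hDl a (a⁻¹ * g) haH h
          simpa [← mul_assoc] using this
        · intro h
          exact hDl a⁻¹ g (inv_mem haH) h
      rw [inv_one, one_smul, hiff]
    have key : ∀ ε : ℂ, (starRingEnd ℂ) ε * ε = 1 → S ε x = S ε b := by
      intro ε hee
      have hden : S ε 1 = 1 + (N 1 : ℂ) := by
        rw [hS, inv_one, if_pos h1H, if_neg hD1, hee]
        ring
      have hden0 : S ε 1 ≠ 0 := by
        rw [hden]
        intro hzero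
        have : ((1 + N 1 : ℕ) : ℂ) = 0 := by push_cast; linear_combination hzero
        rw [Nat.cast_eq_zero] at this
        omega
      have hfne : (∑ c : G ⧸ H, (starRingEnd ℂ) (f ε c) * f ε c) ≠ 0 := by
        rw [hS1eq]
        exact hden0
      have hstate := aux_state_of_fn H (f ε) hfne
      have hpsd := hQ _ hstate
      have hSa : S ε a = S ε 1 := by
        rw [hS, hS, inv_one, if_pos haH, if_pos h1H, if_neg hDa, if_neg hDainv,
          if_neg hD1, hNa]
      have hpa : (fun g : G => (∑ c : G ⧸ H, (starRingEnd ℂ) (f ε c) * f ε (g⁻¹ • c)) /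
          (∑ c : G ⧸ H, (starRingEnd ℂ) (f ε c) * f ε c)) a = 1 := by
        show S ε a / (∑ c : G ⧸ H, (starRingEnd ℂ) (f ε c) * f ε c) = 1
        rw [hS1eq, hSa]
        exact div_self hden0
      have hpe := aux_px_eq_pb hpsd hpa
      have hpe' : S ε x / S ε 1 = S ε b / S ε 1 := by
        rw [← hS1eq ε]
        exact hpe
      have h2 := congrArg (· * S ε 1) hpe'
      simpa [div_mul_cancel₀, hden0] using h2
    have E1 := key 1 (by simp)
    have E2 := key Complex.I (by simp)
    rw [hS, hS] at E1 E2
    -- convert the indicator values to natural numbers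
    set γ : ℕ := if D x⁻¹ then 1 else 0 with hγdef
    set β : ℕ := if D b⁻¹ then 1 else 0 with hβdef
    set δ : ℕ := if b ∈ H then 1 else 0 with hδdef
    have hγ : (if D x⁻¹ then (1:ℂ) else 0) = (γ : ℂ) := by
      rw [hγdef]; split_ifs <;> simp
    have hβ : (if D b⁻¹ then (1:ℂ) else 0) = (β : ℂ) := by
      rw [hβdef]; split_ifs <;> simp
    have hδ : (if b ∈ H then (1:ℂ) else 0) = (δ : ℂ) := by
      rw [hδdef]; split_ifs <;> simp
    rw [if_neg hx, if_pos hDx, if_neg hDb, hγ, hβ, hδ] at E1 E2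
    simp only [map_one, one_mul, mul_one, mul_zero, add_zero, zero_add, Complex.conj_I] at E1 E2
    -- E1 : ↑γ + 1 + ↑(N x) = ↑δ + ↑β + ↑(N b)  (over ℂ)
    have E1' : γ + 1 + N x = δ + β + N b := by
      have : ((γ + 1 + N x : ℕ) : ℂ) = ((δ + β + N b : ℕ) : ℂ) := by
        push_cast
        linear_combination E1
      exact_mod_cast this
    obtain ⟨E2re, E2im⟩ := Complex.ext_iff.1 E2
    simp [Complex.add_re, Complex.add_im, Complex.mul_re, Complex.mul_im] at E2re E2im
    have hre : (N x : ℝ) = δ + N b := by linarith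
    have him : (γ : ℝ) = β + 1 := by linarith
    have hre' : N x = δ + N b := by exact_mod_cast hre
    have him' : γ = β + 1 := by exact_mod_cast him
    omega
end

section
/- Let G be a finite group and let a, b, x ∈ G be such that the matrix Q_p is positive semidefinite for every state p on G. Suppose further that a * b = b * aᵐ for some natural number m, and that b belongs to the double coset H * b⁻¹ * H where H = ⟨a⟩ is the cyclic subgroup generated by a (i.e., there exist integers i, j with b = aⁱ * b⁻¹ * aʲ). Then x = a * b or x = b * a. -/
open scoped ComplexOrder

set_option linter.unusedSectionVars false

noncomputable section StmtAux

namespace StmtAux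

open Finset Complex Matrix

variable {G : Type*} [Group G] [Fintype G] [DecidableEq G]

def ip (v w : G → ℂ) : ℂ := ∑ g, (starRingEnd ℂ) (v g) * w g

def trl (g : G) (v : G → ℂ) : G → ℂ := fun h => v (g⁻¹ * h)

lemma trl_trl (g g' : G) (v : G → ℂ) : trl g (trl g' v) = trl (g * g') v := by
  funext h; simp [trl, mul_assoc]

lemma trl_one (v : G → ℂ) : trl 1 v = v := by funext h; simp [trl]

lemma trl_add (g : G) (v w : G → ℂ) : trl g (v + w) = trl g v + trl g w := by
  funext h; simp [trl]

lemma trl_smul (g : G) (c : ℂ) (v : G → ℂ) : trl g (c • v) = c • trl g v := by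
  funext h; simp [trl]

lemma ip_add_left (u v w : G → ℂ) : ip (u + v) w = ip u w + ip v w := by
  simp [ip, add_mul, Finset.sum_add_distrib]

lemma ip_add_right (u v w : G → ℂ) : ip u (v + w) = ip u v + ip u w := by
  simp [ip, mul_add, Finset.sum_add_distrib]

lemma ip_smul_left (c : ℂ) (u w : G → ℂ) :
    ip (c • u) w = (starRingEnd ℂ) c * ip u w := by
  simp [ip, Finset.mul_sum, mul_assoc]

lemma ip_smul_right (c : ℂ) (u w : G → ℂ) : ip u (c • w) = c * ip u w := by
  simp [ip, Finset.mul_sum]; ring_nf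
  exact Finset.sum_congr rfl fun g _ => by ring

lemma ip_trl_trl (g : G) (u w : G → ℂ) : ip (trl g u) (trl g w) = ip u w := by
  simpa [trl, ip] using
    Equiv.sum_comp (Equiv.mulLeft g⁻¹) (fun h => (starRingEnd ℂ) (u h) * w h)

lemma ip_shift (h k : G) (u w : G → ℂ) :
    ip u (trl (h⁻¹ * k) w) = ip (trl h u) (trl k w) := by
  rw [← ip_trl_trl h u (trl (h⁻¹ * k) w), trl_trl]
  congr 2
  rw [← mul_assoc, mul_inv_cancel, one_mul]

lemma ip_self_eq (v : G → ℂ) : ip v v = ((∑ g, Complex.normSq (v g) : ℝ) : ℂ) := by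
  simp [ip, Complex.normSq_eq_conj_mul_self]

lemma ip_self_pos {v : G → ℂ} (hv : v ≠ 0) : 0 < ∑ g, Complex.normSq (v g) := by
  have : ∃ g, v g ≠ 0 := by
    by_contra h
    push_neg at h
    exact hv (funext fun g => h g)
  obtain ⟨g0, hg0⟩ := this
  refine Finset.sum_pos' (fun g _ => Complex.normSq_nonneg _) ⟨g0, Finset.mem_univ _, ?_⟩
  simpa [Complex.normSq_pos] using hg0

/-- the vector state associated with `v`. -/
def stv (v : G → ℂ) : G → ℂ := fun g => ip v (trl g v) / ip v v

lemma stv_isState {v : G → ℂ} (hv : v ≠ 0) : IsStateFn (stv v) := by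
  have hn : (0:ℝ) < ∑ g, Complex.normSq (v g) := ip_self_pos hv
  have hne : ip v v ≠ 0 := by
    rw [ip_self_eq]
    exact_mod_cast ne_of_gt hn
  constructor
  · intro n g
    have hmat : (Matrix.of fun j k : Fin n => stv v ((g j)⁻¹ * g k)) =
        (((∑ g, Complex.normSq (v g) : ℝ) : ℂ))⁻¹ •
          (((Matrix.of (fun h j => v ((g j)⁻¹ * h)) : Matrix G (Fin n) ℂ))ᴴ *
            ((Matrix.of (fun h j => v ((g j)⁻¹ * h)) : Matrix G (Fin n) ℂ))) := by
      ext j k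
      simp only [Matrix.of_apply, Matrix.smul_apply, Matrix.mul_apply,
        Matrix.conjTranspose_apply, smul_eq_mul]
      rw [stv, ip_shift (g j) (g k) v v, ← ip_self_eq]
      rw [div_eq_inv_mul]
      rfl
    rw [hmat]
    have hBB := Matrix.posSemidef_conjTranspose_mul_self
      ((Matrix.of (fun h j => v ((g j)⁻¹ * h)) : Matrix G (Fin n) ℂ))
    set A := ((Matrix.of (fun h j => v ((g j)⁻¹ * h)) : Matrix G (Fin n) ℂ))ᴴ *
      ((Matrix.of (fun h j => v ((g j)⁻¹ * h)) : Matrix G (Fin n) ℂ))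
    rw [Matrix.posSemidef_iff_dotProduct_mulVec] at hBB ⊢
    constructor
    · have h1 := hBB.1
      unfold Matrix.IsHermitian at h1 ⊢
      rw [Matrix.conjTranspose_smul, h1]
      congr 1
      simp
    · intro y
      have h2 := hBB.2 y
      rw [Matrix.smul_mulVec, dotProduct_smul]
      have hcpos : (0:ℂ) ≤ (((∑ g, Complex.normSq (v g) : ℝ) : ℂ))⁻¹ := by
        rw [← Complex.ofReal_inv]
        rw [Complex.zero_le_real]
        positivity
      calc (0:ℂ) = (((∑ g, Complex.normSq (v g) : ℝ) : ℂ))⁻¹ * 0 := by ring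
      _ ≤ _ := by
          rw [smul_eq_mul]
          exact mul_le_mul_of_nonneg_left h2 hcpos
  · unfold stv
    rw [trl_one, div_self hne]

/-- null-vector extraction from PSD of `Qmat`. -/
lemma qforce {p : G → ℂ} {a b x : G} (h : (Qmat p a b x).PosSemidef) {μ : ℂ}
    (hb : p b = μ) (hμ : μ * (starRingEnd ℂ) μ = 1) : p x = p a * μ := by
  obtain ⟨B, hB⟩ : ∃ B : Matrix (Fin 3) (Fin 3) ℂ, Qmat p a b x = Bᴴ * B := by
    open scoped MatrixOrder in
    exact CStarAlgebra.nonneg_iff_eq_star_mul_self.mp h.nonneg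
  set y : Fin 3 → ℂ := ![0, 1, -(starRingEnd ℂ) μ] with hy
  have hzero : dotProduct (star y) ((Qmat p a b x) *ᵥ y) = 0 := by
    simp [Qmat, Matrix.mulVec, dotProduct, Fin.sum_univ_three, hy, hb]
    linear_combination -hμ
  have hBy : B *ᵥ y = 0 := by
    rw [hB] at hzero
    rw [← Matrix.mulVec_mulVec] at hzero
    rw [Matrix.dotProduct_mulVec, ← Matrix.star_mulVec] at hzero
    exact dotProduct_star_self_eq_zero.mp hzero
  have hQy : (Qmat p a b x) *ᵥ y = 0 := by
    rw [hB, ← Matrix.mulVec_mulVec, hBy, Matrix.mulVec_zero]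
  have h0 := congrFun hQy 0
  simp [Qmat, Matrix.mulVec, dotProduct, Fin.sum_univ_three, hy] at h0
  linear_combination (-(p x)) * hμ - μ * h0

lemma eigen_forces {a b x : G} (hQ : ∀ p : G → ℂ, IsStateFn p → (Qmat p a b x).PosSemidef)
    {v : G → ℂ} (hv : v ≠ 0) {μ : ℂ} (hμ : μ * (starRingEnd ℂ) μ = 1)
    (hev : trl b v = μ • v) :
    ip v (trl x v) = ip v (trl (a * b) v) := by
  have hne : ip v v ≠ 0 := by
    rw [ip_self_eq]
    exact_mod_cast ne_of_gt (ip_self_pos hv)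
  have hstate := stv_isState hv
  have hQp := hQ _ hstate
  have hpb : stv v b = μ := by
    unfold stv
    rw [hev, ip_smul_right, mul_div_assoc, div_self hne, mul_one]
  have hx := qforce hQp hpb hμ
  have hab : stv v (a * b) = stv v a * μ := by
    unfold stv
    rw [← trl_trl, hev, trl_smul, ip_smul_right]
    field_simp
  have hkey : stv v x = stv v (a * b) := by rw [hx, hab]
  unfold stv at hkey
  rw [div_eq_div_iff hne hne] at hkey
  exact mul_right_cancel₀ hne hkey

lemma ip_expand (g : G) (u w : G → ℂ) (c : ℂ) :
    ip (u + c • w) (trl g (u + c • w)) =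
      ip u (trl g u) + c * ip u (trl g w) + (starRingEnd ℂ) c * ip w (trl g u)
        + (starRingEnd ℂ) c * c * ip w (trl g w) := by
  rw [trl_add, trl_smul, ip_add_left, ip_add_right, ip_add_right, ip_smul_left,
    ip_smul_right, ip_smul_right, ip_smul_left]
  ring

/-- the basic coset eigenvector -/
def evec (b : G) (ζ : ℂ) (t : ℕ) (c : G) : G → ℂ :=
  fun g => ∑ l ∈ Finset.range (orderOf b), if g = b ^ l * c then ζ ^ (t * l) else 0

lemma pow_eq_pow_iff_of_lt {b : G} {s l : ℕ} (hs : s < orderOf b) (hl : l < orderOf b) :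
    b ^ s = b ^ l ↔ s = l := by
  rw [pow_eq_pow_iff_modEq, Nat.ModEq, Nat.mod_eq_of_lt hs, Nat.mod_eq_of_lt hl]

lemma evec_apply (b : G) (ζ : ℂ) (t : ℕ) (c : G) {s : ℕ} (hs : s < orderOf b) :
    evec b ζ t c (b ^ s * c) = ζ ^ (t * s) := by
  unfold evec
  have hcongr : ∀ l ∈ Finset.range (orderOf b),
      (if b ^ s * c = b ^ l * c then ζ ^ (t * l) else 0)
        = (if l = s then ζ ^ (t * l) else 0) := by
    intro l hl
    rw [Finset.mem_range] at hl
    refine if_congr ?_ rfl rfl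
    rw [mul_left_inj, pow_eq_pow_iff_of_lt hs hl, eq_comm]
  rw [Finset.sum_congr rfl hcongr, Finset.sum_ite_eq' (Finset.range (orderOf b)) s
    (fun l => ζ ^ (t * l)), if_pos (Finset.mem_range.mpr hs)]

lemma evec_apply_ne (b : G) (ζ : ℂ) (t : ℕ) (c : G) {g : G}
    (h : ∀ l, l < orderOf b → g ≠ b ^ l * c) : evec b ζ t c g = 0 := by
  unfold evec
  refine Finset.sum_eq_zero fun l hl => ?_
  rw [Finset.mem_range] at hl
  exact if_neg (h l hl)

lemma evec_at_base (b : G) (ζ : ℂ) (t : ℕ) (c : G) (hM : 0 < orderOf b) :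
    evec b ζ t c c = 1 := by
  have h0 : evec b ζ t c (b ^ 0 * c) = ζ ^ (t * 0) := evec_apply b ζ t c hM
  simpa using h0

lemma trl_evec {b : G} {ζ : ℂ} (t : ℕ) (c : G) (hM : 0 < orderOf b)
    (hζM : ζ ^ orderOf b = 1) (hζ1 : (starRingEnd ℂ) ζ * ζ = 1) :
    trl b (evec b ζ t c) = ((starRingEnd ℂ) ζ) ^ t • evec b ζ t c := by
  have hζt : ((starRingEnd ℂ) ζ) ^ t * ζ ^ t = 1 := by
    rw [← mul_pow, hζ1, one_pow]
  have hζne : ζ ^ t ≠ 0 := by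
    intro h
    rw [h, mul_zero] at hζt
    exact zero_ne_one hζt
  funext g
  show evec b ζ t c (b⁻¹ * g) = _
  rw [Pi.smul_apply, smul_eq_mul]
  by_cases hg : ∃ s, s < orderOf b ∧ g = b ^ s * c
  · obtain ⟨s, hs, rfl⟩ := hg
    cases s with
    | zero =>
      have hbb : b ^ (orderOf b - 1) = b⁻¹ := by
        apply eq_inv_of_mul_eq_one_left
        rw [← pow_succ, Nat.sub_add_cancel hM, pow_orderOf_eq_one]
      have hbinv : b⁻¹ * (b ^ 0 * c) = b ^ (orderOf b - 1) * c := by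
        rw [hbb, pow_zero, one_mul]
      rw [hbinv, evec_apply b ζ t c (Nat.sub_lt hM Nat.one_pos),
        evec_apply b ζ t c hM]
      apply mul_right_cancel₀ hζne
      have he : t * (orderOf b - 1) + t = orderOf b * t := by
        rw [← Nat.mul_succ, Nat.succ_eq_add_one, Nat.sub_add_cancel hM, Nat.mul_comm]
      rw [← pow_add, he, pow_mul, hζM, one_pow]
      rw [Nat.mul_zero, pow_zero, mul_one, hζt]
    | succ s' =>
      have hbinv : b⁻¹ * (b ^ (s' + 1) * c) = b ^ s' * c := by
        rw [pow_succ', mul_assoc, inv_mul_cancel_left]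
      rw [hbinv, evec_apply b ζ t c (Nat.lt_of_succ_lt hs),
        evec_apply b ζ t c hs, Nat.mul_succ, pow_add]
      linear_combination (-(ζ ^ (t * s'))) * hζt
  · push_neg at hg
    rw [evec_apply_ne b ζ t c hg, mul_zero]
    apply evec_apply_ne
    intro l hl heq
    rw [inv_mul_eq_iff_eq_mul, ← mul_assoc, ← pow_succ'] at heq
    refine hg ((l + 1) % orderOf b) (Nat.mod_lt _ hM) ?_
    rw [pow_mod_orderOf]
    exact heq

lemma ip_evec (b : G) (ζ : ℂ) (t : ℕ) (c₁ c₂ : G) (g : G) :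
    ip (evec b ζ t c₁) (trl g (evec b ζ t c₂)) =
      ∑ l ∈ Finset.range (orderOf b), ∑ l' ∈ Finset.range (orderOf b),
        if g⁻¹ * (b ^ l * c₁) = b ^ l' * c₂
        then ((starRingEnd ℂ) ζ) ^ (t * l) * ζ ^ (t * l') else 0 := by
  have step1 : ∀ h : G,
      (starRingEnd ℂ) (∑ l ∈ Finset.range (orderOf b), if h = b ^ l * c₁ then ζ ^ (t*l) else 0) *
        (∑ l' ∈ Finset.range (orderOf b), if g⁻¹ * h = b ^ l' * c₂ then ζ ^ (t*l') else 0)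
      = ∑ l ∈ Finset.range (orderOf b), (if h = b ^ l * c₁ then
          (∑ l' ∈ Finset.range (orderOf b), if g⁻¹ * h = b ^ l' * c₂ then
             ((starRingEnd ℂ) ζ)^(t*l) * ζ ^ (t*l') else 0) else 0) := by
    intro h
    rw [map_sum, Finset.sum_mul]
    refine Finset.sum_congr rfl fun l _ => ?_
    rw [apply_ite (starRingEnd ℂ), map_zero, map_pow, ite_mul, zero_mul, Finset.mul_sum]
    refine if_congr Iff.rfl ?_ rfl
    refine Finset.sum_congr rfl fun l' _ => ?_
    rw [mul_ite, mul_zero]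
  have lhs_eq : ip (evec b ζ t c₁) (trl g (evec b ζ t c₂))
      = ∑ h : G, ∑ l ∈ Finset.range (orderOf b), (if h = b ^ l * c₁ then
          (∑ l' ∈ Finset.range (orderOf b), if g⁻¹ * h = b ^ l' * c₂ then
             ((starRingEnd ℂ) ζ)^(t*l) * ζ ^ (t*l') else 0) else 0) := by
    simp only [ip, trl, evec]
    exact Finset.sum_congr rfl fun h _ => step1 h
  rw [lhs_eq, Finset.sum_comm]
  refine Finset.sum_congr rfl fun l hl => ?_
  rw [Finset.sum_ite_eq' Finset.univ (b ^ l * c₁)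
      (fun h => ∑ l' ∈ Finset.range (orderOf b),
        if g⁻¹ * h = b ^ l' * c₂ then ((starRingEnd ℂ) ζ) ^ (t*l) * ζ ^ (t*l') else 0),
    if_pos (Finset.mem_univ _)]

lemma prim_conj {M : ℕ} (hM : 0 < M) {ζ : ℂ} (hζ : IsPrimitiveRoot ζ M) :
    (starRingEnd ℂ) ζ * ζ = 1 := by
  have habs : ‖ζ‖ = 1 := by
    have hpow : (‖ζ‖) ^ M = 1 := by rw [← norm_pow, hζ.pow_eq_one, norm_one]
    rcases lt_trichotomy (‖ζ‖) 1 with h | h | h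
    · exact absurd hpow (ne_of_lt (pow_lt_one₀ (norm_nonneg ζ) h hM.ne'))
    · exact h
    · exact absurd hpow (ne_of_gt (one_lt_pow₀ h hM.ne'))
  have := Complex.normSq_eq_norm_sq ζ
  rw [habs] at this
  rw [mul_comm, Complex.mul_conj, this]
  norm_num

lemma pow_mod_of_pow_eq_one {M : ℕ} {ζ : ℂ} (hζM : ζ ^ M = 1) (n : ℕ) :
    ζ ^ n = ζ ^ (n % M) := by
  conv_lhs => rw [← Nat.div_add_mod n M]
  rw [pow_add, pow_mul, hζM, one_pow, one_mul]

lemma rootsum {M : ℕ} (hM : 0 < M) {ζ : ℂ} (hζ : IsPrimitiveRoot ζ M) (e f : ℕ) :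
    ∑ t ∈ Finset.range M, ((starRingEnd ℂ) ζ) ^ (t * e) * ζ ^ (t * f) =
      if e % M = f % M then (M : ℂ) else 0 := by
  have hζM : ζ ^ M = 1 := hζ.pow_eq_one
  have hζ1 : (starRingEnd ℂ) ζ * ζ = 1 := prim_conj hM hζ
  have hterm : ∀ t, ((starRingEnd ℂ) ζ) ^ (t * e) * ζ ^ (t * f)
      = (((starRingEnd ℂ) ζ) ^ e * ζ ^ f) ^ t := by
    intro t
    rw [mul_pow, ← pow_mul, ← pow_mul, Nat.mul_comm e t, Nat.mul_comm f t]
  rw [Finset.sum_congr rfl (fun t _ => hterm t)]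
  have hq1 : ((starRingEnd ℂ) ζ) ^ e * ζ ^ e = 1 := by rw [← mul_pow, hζ1, one_pow]
  by_cases h : e % M = f % M
  · have hef : ζ ^ e = ζ ^ f := by
      rw [pow_mod_of_pow_eq_one hζM e, pow_mod_of_pow_eq_one hζM f, h]
    rw [show ((starRingEnd ℂ) ζ) ^ e * ζ ^ f = 1 from by rw [← hef, hq1]]
    simp [h]
  · have hq : ((starRingEnd ℂ) ζ) ^ e * ζ ^ f ≠ 1 := by
      intro hcon
      apply h
      have hne : ((starRingEnd ℂ) ζ) ^ e ≠ 0 := fun h0 => by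
        rw [h0, zero_mul] at hq1; exact zero_ne_one hq1
      have hef : ζ ^ e = ζ ^ f := mul_left_cancel₀ hne (by rw [hq1, hcon])
      exact hζ.pow_inj (Nat.mod_lt e hM) (Nat.mod_lt f hM)
        (by rw [← pow_mod_of_pow_eq_one hζM e, ← pow_mod_of_pow_eq_one hζM f, hef])
    have hcM : ((starRingEnd ℂ) ζ) ^ M = 1 := by rw [← map_pow, hζM, _root_.map_one]
    have hqM : (((starRingEnd ℂ) ζ) ^ e * ζ ^ f) ^ M = 1 := by
      rw [mul_pow, ← pow_mul, ← pow_mul, Nat.mul_comm e M, Nat.mul_comm f M,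
        pow_mul, pow_mul, hcM, hζM, one_pow, one_pow, one_mul]
    rw [geom_sum_eq hq, hqM]
    simp [h]

lemma sum_ite_const {c : Prop} [Decidable c] (s : Finset ℕ) (f : ℕ → ℂ) :
    (∑ t ∈ s, if c then f t else 0) = if c then ∑ t ∈ s, f t else 0 := by
  split <;> simp

lemma key (b : G) {ζ : ℂ} (hζ : IsPrimitiveRoot ζ (orderOf b)) (hM : 0 < orderOf b)
    (r : ℕ) (c₁ c₂ g : G) :
    ∑ t ∈ Finset.range (orderOf b),
        ζ ^ (t * r) * ip (evec b ζ t c₁) (trl g (evec b ζ t c₂)) =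
      (orderOf b : ℂ) * (((Finset.range (orderOf b) ×ˢ Finset.range (orderOf b)).filter
        (fun q : ℕ × ℕ => g⁻¹ * (b ^ q.1 * c₁) = b ^ q.2 * c₂ ∧
          q.1 % orderOf b = (q.2 + r) % orderOf b)).card : ℂ) := by
  set M := orderOf b with hMdef
  calc ∑ t ∈ Finset.range M, ζ ^ (t * r) * ip (evec b ζ t c₁) (trl g (evec b ζ t c₂))
      = ∑ t ∈ Finset.range M, ∑ l ∈ Finset.range M, ∑ l' ∈ Finset.range M,
          (if g⁻¹ * (b ^ l * c₁) = b ^ l' * c₂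
            then ((starRingEnd ℂ) ζ) ^ (t * l) * ζ ^ (t * (l' + r)) else 0) := by
        refine Finset.sum_congr rfl fun t _ => ?_
        rw [ip_evec, Finset.mul_sum]
        refine Finset.sum_congr rfl fun l _ => ?_
        rw [Finset.mul_sum]
        refine Finset.sum_congr rfl fun l' _ => ?_
        rw [mul_ite, mul_zero]
        refine if_congr Iff.rfl ?_ rfl
        rw [Nat.mul_add, pow_add]
        ring
    _ = ∑ l ∈ Finset.range M, ∑ l' ∈ Finset.range M, ∑ t ∈ Finset.range M,
          (if g⁻¹ * (b ^ l * c₁) = b ^ l' * c₂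
            then ((starRingEnd ℂ) ζ) ^ (t * l) * ζ ^ (t * (l' + r)) else 0) := by
        rw [Finset.sum_comm]
        exact Finset.sum_congr rfl fun l _ => Finset.sum_comm
    _ = ∑ l ∈ Finset.range M, ∑ l' ∈ Finset.range M,
          (if (g⁻¹ * (b ^ l * c₁) = b ^ l' * c₂ ∧ l % M = (l' + r) % M)
            then (M : ℂ) else 0) := by
        refine Finset.sum_congr rfl fun l _ => Finset.sum_congr rfl fun l' _ => ?_
        rw [sum_ite_const, rootsum hM hζ l (l' + r)]
        by_cases h1 : g⁻¹ * (b ^ l * c₁) = b ^ l' * c₂ <;>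
          by_cases h2 : l % M = (l' + r) % M <;> simp [h1, h2]
    _ = ∑ q ∈ Finset.range M ×ˢ Finset.range M,
          (if (g⁻¹ * (b ^ q.1 * c₁) = b ^ q.2 * c₂ ∧ q.1 % M = (q.2 + r) % M)
            then (M : ℂ) else 0) := by
        rw [Finset.sum_product]
    _ = _ := by
        rw [← Finset.sum_filter, Finset.sum_const, nsmul_eq_mul, mul_comm]

end StmtAux
end StmtAux

open StmtAux in
theorem stmt_16 {G : Type*} [Group G] [Finite G] (a b x : G)
    (hQ : ∀ p : G → ℂ, IsStateFn p → (Qmat p a b x).PosSemidef)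
    (hm : ∃ m : ℕ, a * b = b * a ^ m)
    (hdc : ∃ i j : ℤ, b = a ^ i * b⁻¹ * a ^ j) :
    x = a * b ∨ x = b * a := by
  cases nonempty_fintype G
  letI : DecidableEq G := Classical.decEq G
  obtain ⟨m, hm⟩ := hm
  obtain ⟨i, j, hdc⟩ := hdc
  have hM : 0 < orderOf b := orderOf_pos b
  obtain ⟨ζ, hζ⟩ : ∃ ζ : ℂ, IsPrimitiveRoot ζ (orderOf b) :=
    ⟨_, Complex.isPrimitiveRoot_exp _ hM.ne'⟩
  have hζM : ζ ^ orderOf b = 1 := hζ.pow_eq_one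
  have hζ1 : (starRingEnd ℂ) ζ * ζ = 1 := prim_conj hM hζ
  have hMne : ((orderOf b : ℕ) : ℂ) ≠ 0 := Nat.cast_ne_zero.mpr hM.ne'
  -- forced identity for nonzero eigenvectors
  have hforce : ∀ (t : ℕ) (v : G → ℂ), v ≠ 0 →
      trl b v = ((starRingEnd ℂ) ζ) ^ t • v →
      ip v (trl x v) = ip v (trl (a * b) v) := by
    intro t v hv hev
    refine eigen_forces hQ hv ?_ hev
    rw [map_pow, Complex.conj_conj, ← mul_pow, hζ1, one_pow]
  -- Step 1 : x is a conjugate of a*b by a power of b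
  have hl : ∃ l : ℕ, x = b ^ l * (a * b) * (b ^ l)⁻¹ := by
    by_cases hA : ∃ r : ℕ, a * b = b ^ r
    · -- commuting case : use single-coset eigenvectors
      obtain ⟨r, hr⟩ := hA
      have hune : ∀ t : ℕ, evec b ζ t (1:G) ≠ (0 : G → ℂ) := by
        intro t h0
        have h1 := congrFun h0 (1:G)
        rw [evec_at_base b ζ t 1 hM] at h1
        exact one_ne_zero h1
      have hident : ∀ t : ℕ,
          ip (evec b ζ t 1) (trl x (evec b ζ t 1)) =
            ip (evec b ζ t 1) (trl (a * b) (evec b ζ t 1)) := by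
        intro t
        exact hforce t _ (hune t) (trl_evec t 1 hM hζM hζ1)
      have hsum : ∑ t ∈ Finset.range (orderOf b),
            ζ ^ (t * r) * ip (evec b ζ t 1) (trl x (evec b ζ t 1)) =
          ∑ t ∈ Finset.range (orderOf b),
            ζ ^ (t * r) * ip (evec b ζ t 1) (trl (a * b) (evec b ζ t 1)) :=
        Finset.sum_congr rfl fun t _ => by rw [hident t]
      rw [key b hζ hM r 1 1 x, key b hζ hM r 1 1 (a * b)] at hsum
      have hcard := Nat.cast_inj.mp (mul_left_cancel₀ hMne hsum)
      have hmem : ((r % orderOf b, 0) : ℕ × ℕ) ∈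
          (Finset.range (orderOf b) ×ˢ Finset.range (orderOf b)).filter
            (fun q : ℕ × ℕ => (a * b)⁻¹ * (b ^ q.1 * 1) = b ^ q.2 * 1 ∧
              q.1 % orderOf b = (q.2 + r) % orderOf b) := by
        rw [Finset.mem_filter, Finset.mem_product]
        refine ⟨⟨Finset.mem_range.mpr (Nat.mod_lt _ hM), Finset.mem_range.mpr hM⟩, ?_, ?_⟩
        · rw [pow_mod_orderOf, ← hr]
          group
        · rw [Nat.mod_mod_of_dvd r (dvd_refl _), Nat.zero_add]
      have hpos : 0 < ((Finset.range (orderOf b) ×ˢ Finset.range (orderOf b)).filter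
            (fun q : ℕ × ℕ => x⁻¹ * (b ^ q.1 * 1) = b ^ q.2 * 1 ∧
              q.1 % orderOf b = (q.2 + r) % orderOf b)).card := by
        rw [hcard]
        exact Finset.card_pos.mpr ⟨_, hmem⟩
      obtain ⟨⟨l, l'⟩, hq⟩ := Finset.card_pos.mp hpos
      rw [Finset.mem_filter] at hq
      obtain ⟨-, hq1, hq2⟩ := hq
      rw [mul_one, mul_one] at hq1
      have hbl : b ^ l = b ^ (l' + r) := pow_eq_pow_iff_modEq.mpr hq2
      have hxab : x = a * b := by
        have h' : x⁻¹ = b ^ l' * (b ^ l)⁻¹ := by rw [← hq1]; group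
        have hx' : x = b ^ l * (b ^ l')⁻¹ := by rw [← inv_inv x, h']; group
        rw [hx', hbl, pow_add, hr]
        group
      exact ⟨0, by rw [hxab]; group⟩
    · -- generic case : two cosets and polarization
      push_neg at hA
      set c : G := (a * b)⁻¹ with hc
      have hwzero : ∀ t : ℕ, evec b ζ t c (1:G) = 0 := by
        intro t
        apply evec_apply_ne
        intro l hlM heq
        refine hA l ?_
        rw [hc] at heq
        rw [eq_comm, mul_inv_eq_iff_eq_mul, one_mul] at heq
        exact heq.symm
      have hvne : ∀ (t : ℕ) (c' : ℂ),
          evec b ζ t 1 + c' • evec b ζ t c ≠ (0 : G → ℂ) := by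
        intro t c' h0
        have h1 := congrFun h0 (1:G)
        rw [Pi.add_apply, Pi.smul_apply, hwzero t, smul_eq_mul, mul_zero, add_zero,
          evec_at_base b ζ t 1 hM] at h1
        exact one_ne_zero h1
      have hev : ∀ (t : ℕ) (c' : ℂ),
          trl b (evec b ζ t 1 + c' • evec b ζ t c) =
            ((starRingEnd ℂ) ζ) ^ t • (evec b ζ t 1 + c' • evec b ζ t c) := by
        intro t c'
        rw [trl_add, trl_smul, trl_evec t 1 hM hζM hζ1, trl_evec t c hM hζM hζ1,
          smul_add, smul_comm]
      have hident : ∀ t : ℕ,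
          ip (evec b ζ t 1) (trl x (evec b ζ t c)) =
            ip (evec b ζ t 1) (trl (a * b) (evec b ζ t c)) := by
        intro t
        have h1 := hforce t _ (hvne t 1) (hev t 1)
        have h2 := hforce t _ (hvne t (-1)) (hev t (-1))
        have h3 := hforce t _ (hvne t Complex.I) (hev t Complex.I)
        rw [ip_expand, ip_expand] at h1 h2 h3
        simp only [map_one, map_neg, Complex.conj_I, one_mul, mul_one, neg_mul, mul_neg,
          neg_neg, Complex.I_mul_I] at h1 h2 h3
        have hs1 : ip (evec b ζ t 1) (trl x (evec b ζ t c))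
              + ip (evec b ζ t c) (trl x (evec b ζ t 1))
            = ip (evec b ζ t 1) (trl (a * b) (evec b ζ t c))
              + ip (evec b ζ t c) (trl (a * b) (evec b ζ t 1)) := by
          linear_combination (h1 - h2) / 2
        have hs2 : Complex.I * (ip (evec b ζ t 1) (trl x (evec b ζ t c))
              - ip (evec b ζ t c) (trl x (evec b ζ t 1)))
            = Complex.I * (ip (evec b ζ t 1) (trl (a * b) (evec b ζ t c))
              - ip (evec b ζ t c) (trl (a * b) (evec b ζ t 1))) := by
          linear_combination h3 - h1 + hs1
        have hs3 := mul_left_cancel₀ Complex.I_ne_zero hs2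
        linear_combination (hs1 + hs3) / 2
      have hsum : ∑ t ∈ Finset.range (orderOf b),
            ζ ^ (t * 0) * ip (evec b ζ t 1) (trl x (evec b ζ t c)) =
          ∑ t ∈ Finset.range (orderOf b),
            ζ ^ (t * 0) * ip (evec b ζ t 1) (trl (a * b) (evec b ζ t c)) :=
        Finset.sum_congr rfl fun t _ => by rw [hident t]
      rw [key b hζ hM 0 1 c x, key b hζ hM 0 1 c (a * b)] at hsum
      have hcard := Nat.cast_inj.mp (mul_left_cancel₀ hMne hsum)
      have hmem : ((0, 0) : ℕ × ℕ) ∈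
          (Finset.range (orderOf b) ×ˢ Finset.range (orderOf b)).filter
            (fun q : ℕ × ℕ => (a * b)⁻¹ * (b ^ q.1 * 1) = b ^ q.2 * c ∧
              q.1 % orderOf b = (q.2 + 0) % orderOf b) := by
        rw [Finset.mem_filter, Finset.mem_product]
        refine ⟨⟨Finset.mem_range.mpr hM, Finset.mem_range.mpr hM⟩, ?_, rfl⟩
        simp [hc]
      have hpos : 0 < ((Finset.range (orderOf b) ×ˢ Finset.range (orderOf b)).filter
            (fun q : ℕ × ℕ => x⁻¹ * (b ^ q.1 * 1) = b ^ q.2 * c ∧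
              q.1 % orderOf b = (q.2 + 0) % orderOf b)).card := by
        rw [hcard]
        exact Finset.card_pos.mpr ⟨_, hmem⟩
      obtain ⟨⟨l, l'⟩, hq⟩ := Finset.card_pos.mp hpos
      rw [Finset.mem_filter] at hq
      obtain ⟨-, hq1, hq2⟩ := hq
      rw [mul_one] at hq1
      have hbl : b ^ l = b ^ l' := pow_eq_pow_iff_modEq.mpr (by
        show l % orderOf b = l' % orderOf b
        rw [hq2, Nat.add_zero])
      refine ⟨l, ?_⟩
      rw [hc, ← hbl] at hq1
      have h' : x⁻¹ = b ^ l * (a * b)⁻¹ * (b ^ l)⁻¹ := by rw [← hq1]; group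
      rw [← inv_inv x, h']
      group
  -- Step 2 : group combinatorics
  obtain ⟨l, hx⟩ := hl
  have E1 : b * a ^ m * b⁻¹ = a := by
    rw [← hm, mul_inv_cancel_right]
  have hconj : b⁻¹ * a * b = a ^ m := by
    rw [mul_assoc, hm]
    group
  have E2 : b * a * b⁻¹ = a ^ m := by
    calc b * a * b⁻¹
        = (a ^ i * b⁻¹ * a ^ j) * a * (a ^ i * b⁻¹ * a ^ j)⁻¹ := by rw [← hdc]
      _ = a ^ i * (b⁻¹ * (a ^ j * a * (a ^ j)⁻¹) * b) * (a ^ i)⁻¹ := by group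
      _ = a ^ i * (b⁻¹ * a * b) * (a ^ i)⁻¹ := by
          rw [show a ^ j * a * (a ^ j)⁻¹ = a from by group]
      _ = a ^ i * a ^ m * (a ^ i)⁻¹ := by rw [hconj]
      _ = a ^ m := by group
  have hind : ∀ n : ℕ, b ^ n * a ^ m * (b ^ n)⁻¹ = if n % 2 = 0 then a ^ m else a := by
    intro n
    induction n with
    | zero => simp
    | succ k ih =>
      have hstep : b ^ (k + 1) * a ^ m * (b ^ (k + 1))⁻¹ =
          b * (b ^ k * a ^ m * (b ^ k)⁻¹) * b⁻¹ := by
        rw [pow_succ']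
        group
      rw [hstep, ih]
      by_cases h : k % 2 = 0
      · rw [if_pos h, if_neg (by omega), E1]
      · rw [if_neg h, if_pos (by omega), E2]
  have hx' : x = b * (b ^ l * a ^ m * (b ^ l)⁻¹) := by
    rw [hx, hm]
    group
  rw [hind l] at hx'
  by_cases h : l % 2 = 0
  · rw [if_pos h] at hx'
    exact Or.inl (by rw [hx', ← hm])
  · rw [if_neg h] at hx'
    exact Or.inr hx'
end
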